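/- arXiv:2505.06555 — 6 statements merged into one kernel-verified Lean document; each statement's English description precedes it below -/
import Mathlib

section
/- Let U ⊆ ℍ be an axially symmetric open set and f : U → ℍ left slice hyperholomorphic. Then for every q ∈ U∖ℝ: Df(q) = −(Im q)⁻¹·Γf(q), where Γ is the spherical Gamma operator. -/
noncomputable section
open Quaternion

/-- The imaginary units of `ℍ`. -/
def e1 : ℍ[ℝ] := ⟨0, 1, 0, 0⟩
def e2 : ℍ[ℝ] := ⟨0, 0, 1, 0⟩
def e3 : ℍ[ℝ] := ⟨0, 0, 0, 1⟩

/-- The Cauchy–Fueter operator `Df = ∂₀f + e₁∂₁f + e₂∂₂f + e₃∂₃f`. -/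
def CF (f : ℍ[ℝ] → ℍ[ℝ]) (q : ℍ[ℝ]) : ℍ[ℝ] :=
  fderiv ℝ f q 1 + e1 * fderiv ℝ f q e1 + e2 * fderiv ℝ f q e2 + e3 * fderiv ℝ f q e3

/-- The spherical Gamma operator
`Γf(q) = −∑_{1≤j<k≤3} eⱼeₖ (qⱼ∂ₖf(q) − qₖ∂ⱼf(q))`. -/
def Gammaop (f : ℍ[ℝ] → ℍ[ℝ]) (q : ℍ[ℝ]) : ℍ[ℝ] :=
  -((e1 * e2) * (q.imI • fderiv ℝ f q e2 - q.imJ • fderiv ℝ f q e1) +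
    (e1 * e3) * (q.imI • fderiv ℝ f q e3 - q.imK • fderiv ℝ f q e1) +
    (e2 * e3) * (q.imJ • fderiv ℝ f q e3 - q.imK • fderiv ℝ f q e2))

/-- `U ⊆ ℍ` is axially symmetric. -/
def AxiallySymmetric (U : Set ℍ[ℝ]) : Prop :=
  ∀ (u v : ℝ) (I J : ℍ[ℝ]), I.re = 0 → ‖I‖ = 1 → J.re = 0 → ‖J‖ = 1 →
    (u : ℍ[ℝ]) + v • I ∈ U → (u : ℍ[ℝ]) + v • J ∈ U

/-- `f` is left slice hyperholomorphic on `U` with defining pair `(α, β)`. -/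
structure IsSliceHyperholomorphic (U : Set ℍ[ℝ]) (f : ℍ[ℝ] → ℍ[ℝ])
    (α β : ℝ × ℝ → ℍ[ℝ]) : Prop where
  contDiff_α : ContDiff ℝ 1 α
  contDiff_β : ContDiff ℝ 1 β
  even_α : ∀ u v : ℝ, α (u, -v) = α (u, v)
  odd_β : ∀ u v : ℝ, β (u, -v) = -β (u, v)
  CR₁ : ∀ u v : ℝ, fderiv ℝ α (u, v) (1, 0) - fderiv ℝ β (u, v) (0, 1) = 0
  CR₂ : ∀ u v : ℝ, fderiv ℝ α (u, v) (0, 1) + fderiv ℝ β (u, v) (1, 0) = 0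
  rep : ∀ (u v : ℝ) (I : ℍ[ℝ]), I.re = 0 → ‖I‖ = 1 →
    (u : ℍ[ℝ]) + v • I ∈ U → f ((u : ℍ[ℝ]) + v • I) = α (u, v) + I * β (u, v)

/-! ### Auxiliary material -/

@[simp] theorem e1_re : e1.re = 0 := rfl
@[simp] theorem e1_imI : e1.imI = 1 := rfl
@[simp] theorem e1_imJ : e1.imJ = 0 := rfl
@[simp] theorem e1_imK : e1.imK = 0 := rfl
@[simp] theorem e2_re : e2.re = 0 := rfl
@[simp] theorem e2_imI : e2.imI = 0 := rfl
@[simp] theorem e2_imJ : e2.imJ = 1 := rfl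
@[simp] theorem e2_imK : e2.imK = 0 := rfl
@[simp] theorem e3_re : e3.re = 0 := rfl
@[simp] theorem e3_imI : e3.imI = 0 := rfl
@[simp] theorem e3_imJ : e3.imJ = 0 := rfl
@[simp] theorem e3_imK : e3.imK = 1 := rfl

def iL : ℍ[ℝ] →L[ℝ] ℝ := ⟨QuaternionAlgebra.imIₗ (-1 : ℝ) (0 : ℝ) (-1 : ℝ), Quaternion.continuous_imI⟩
def jL : ℍ[ℝ] →L[ℝ] ℝ := ⟨QuaternionAlgebra.imJₗ (-1 : ℝ) (0 : ℝ) (-1 : ℝ), Quaternion.continuous_imJ⟩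
def kL : ℍ[ℝ] →L[ℝ] ℝ := ⟨QuaternionAlgebra.imKₗ (-1 : ℝ) (0 : ℝ) (-1 : ℝ), Quaternion.continuous_imK⟩
def reL : ℍ[ℝ] →L[ℝ] ℝ := ⟨QuaternionAlgebra.reₗ (-1 : ℝ) (0 : ℝ) (-1 : ℝ), Quaternion.continuous_re⟩
def imL : ℍ[ℝ] →L[ℝ] ℍ[ℝ] :=
  ⟨{ toFun := Quaternion.im
     map_add' := fun a b => by ext <;> simp
     map_smul' := fun c a => by ext <;> simp }, Quaternion.continuous_im⟩

@[simp] theorem iL_apply (p : ℍ[ℝ]) : iL p = p.imI := rfl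
@[simp] theorem jL_apply (p : ℍ[ℝ]) : jL p = p.imJ := rfl
@[simp] theorem kL_apply (p : ℍ[ℝ]) : kL p = p.imK := rfl
@[simp] theorem reL_apply (p : ℍ[ℝ]) : reL p = p.re := rfl
@[simp] theorem imL_apply (p : ℍ[ℝ]) : imL p = p.im := rfl

def Sfun (p : ℍ[ℝ]) : ℝ := p.imI * p.imI + (p.imJ * p.imJ + p.imK * p.imK)
def Rfun (p : ℍ[ℝ]) : ℝ := Real.sqrt (Sfun p)

theorem Sfun_eq (p : ℍ[ℝ]) : Sfun p = ‖p.im‖ * ‖p.im‖ := by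
  rw [← Quaternion.normSq_eq_norm_mul_self, Quaternion.normSq_def']
  simp only [Quaternion.re_im, Quaternion.imI_im, Quaternion.imJ_im, Quaternion.imK_im, Sfun, sq]
  ring

theorem Rfun_eq_norm (p : ℍ[ℝ]) : Rfun p = ‖p.im‖ := by
  rw [Rfun, Sfun_eq, Real.sqrt_mul_self (norm_nonneg _)]

theorem Rfun_pos {p : ℍ[ℝ]} (h : p.im ≠ 0) : 0 < Rfun p := by
  rw [Rfun_eq_norm]; exact norm_pos_iff.2 h

theorem Sfun_pos {p : ℍ[ℝ]} (h : p.im ≠ 0) : 0 < Sfun p := by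
  rw [Sfun_eq]; exact mul_pos (norm_pos_iff.2 h) (norm_pos_iff.2 h)

theorem f_eq_g {U : Set ℍ[ℝ]} {f : ℍ[ℝ] → ℍ[ℝ]} {α β : ℝ × ℝ → ℍ[ℝ]}
    (hslice : IsSliceHyperholomorphic U f α β) {p : ℍ[ℝ]} (hp : p ∈ U) (him : p.im ≠ 0) :
    f p = α (p.re, Rfun p) + ((Rfun p)⁻¹ • p.im) * β (p.re, Rfun p) := by
  have hRpos := Rfun_pos him
  set I : ℍ[ℝ] := (Rfun p)⁻¹ • p.im with hI
  have hIre : I.re = 0 := by simp [hI]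
  have hInorm : ‖I‖ = 1 := by
    rw [hI, norm_smul, ← Rfun_eq_norm, Real.norm_eq_abs, abs_of_pos (by positivity),
      inv_mul_cancel₀ hRpos.ne']
  have hdec : (p.re : ℍ[ℝ]) + (Rfun p) • I = p := by
    rw [hI, smul_smul, mul_inv_cancel₀ hRpos.ne', one_smul, Quaternion.re_add_im]
  have := hslice.rep p.re (Rfun p) I hIre hInorm (by rw [hdec]; exact hp)
  rw [hdec] at this
  exact this

set_option maxHeartbeats 2000000 in
/-- The key pure algebraic identity. -/
theorem keylemma (c1 c2 c3 r : ℝ) (hr : 0 < r)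
    (hs : c1*c1+c2*c2+c3*c3 = r*r) (n X Y b : ℍ[ℝ]) (hn : n = ⟨0, c1, c2, c3⟩) :
    (X + (r⁻¹ • n) * -Y)
    + e1 * ((c1/r) • Y + ((r⁻¹ • n) * ((c1/r) • X) + (r⁻¹ • e1 + (-(r^2)⁻¹ * (c1/r)) • n) * b))
    + e2 * ((c2/r) • Y + ((r⁻¹ • n) * ((c2/r) • X) + (r⁻¹ • e2 + (-(r^2)⁻¹ * (c2/r)) • n) * b))
    + e3 * ((c3/r) • Y + ((r⁻¹ • n) * ((c3/r) • X) + (r⁻¹ • e3 + (-(r^2)⁻¹ * (c3/r)) • n) * b))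
    = (-((c1*c1+c2*c2+c3*c3)⁻¹ • star n)) *
    -((e1*e2) * (c1 • ((c2/r) • Y + ((r⁻¹ • n) * ((c2/r) • X) + (r⁻¹ • e2 + (-(r^2)⁻¹ * (c2/r)) • n) * b))
               - c2 • ((c1/r) • Y + ((r⁻¹ • n) * ((c1/r) • X) + (r⁻¹ • e1 + (-(r^2)⁻¹ * (c1/r)) • n) * b))) +
      (e1*e3) * (c1 • ((c3/r) • Y + ((r⁻¹ • n) * ((c3/r) • X) + (r⁻¹ • e3 + (-(r^2)⁻¹ * (c3/r)) • n) * b))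
               - c3 • ((c1/r) • Y + ((r⁻¹ • n) * ((c1/r) • X) + (r⁻¹ • e1 + (-(r^2)⁻¹ * (c1/r)) • n) * b))) +
      (e2*e3) * (c2 • ((c3/r) • Y + ((r⁻¹ • n) * ((c3/r) • X) + (r⁻¹ • e3 + (-(r^2)⁻¹ * (c3/r)) • n) * b))
               - c3 • ((c2/r) • Y + ((r⁻¹ • n) * ((c2/r) • X) + (r⁻¹ • e2 + (-(r^2)⁻¹ * (c2/r)) • n) * b)))) := by
  have hs' : (0:ℝ) < c1*c1+c2*c2+c3*c3 := hs ▸ mul_pos hr hr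
  have hCF :
      (X + (r⁻¹ • n) * -Y)
      + e1 * ((c1/r) • Y + ((r⁻¹ • n) * ((c1/r) • X) + (r⁻¹ • e1 + (-(r^2)⁻¹ * (c1/r)) • n) * b))
      + e2 * ((c2/r) • Y + ((r⁻¹ • n) * ((c2/r) • X) + (r⁻¹ • e2 + (-(r^2)⁻¹ * (c2/r)) • n) * b))
      + e3 * ((c3/r) • Y + ((r⁻¹ • n) * ((c3/r) • X) + (r⁻¹ • e3 + (-(r^2)⁻¹ * (c3/r)) • n) * b))
      = (1 - (c1*c1+c2*c2+c3*c3)*(r⁻¹*r⁻¹)) • X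
        + ((-3)*r⁻¹ + (c1*c1+c2*c2+c3*c3)*(r⁻¹*r⁻¹*r⁻¹)) • b := by
    obtain ⟨hn0, hn1, hn2, hn3⟩ : n.re = 0 ∧ n.imI = c1 ∧ n.imJ = c2 ∧ n.imK = c3 := by
      subst hn; exact ⟨rfl, rfl, rfl, rfl⟩
    ext <;>
      simp only [Quaternion.re_mul, Quaternion.imI_mul, Quaternion.imJ_mul, Quaternion.imK_mul,
        Quaternion.re_add, Quaternion.imI_add, Quaternion.imJ_add, Quaternion.imK_add,
        Quaternion.re_neg, Quaternion.imI_neg, Quaternion.imJ_neg, Quaternion.imK_neg,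
        Quaternion.re_smul, Quaternion.imI_smul, Quaternion.imJ_smul, Quaternion.imK_smul,
        Quaternion.re_sub, Quaternion.imI_sub, Quaternion.imJ_sub, Quaternion.imK_sub,
        Quaternion.re_one, Quaternion.imI_one, Quaternion.imJ_one, Quaternion.imK_one,
        e1_re, e1_imI, e1_imJ, e1_imK, e2_re, e2_imI, e2_imJ, e2_imK,
        e3_re, e3_imI, e3_imJ, e3_imK, smul_eq_mul, hn0, hn1, hn2, hn3] <;>
      ring
  have hGa :
      (-((c1*c1+c2*c2+c3*c3)⁻¹ • star n)) *
      -((e1*e2) * (c1 • ((c2/r) • Y + ((r⁻¹ • n) * ((c2/r) • X) + (r⁻¹ • e2 + (-(r^2)⁻¹ * (c2/r)) • n) * b))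
                 - c2 • ((c1/r) • Y + ((r⁻¹ • n) * ((c1/r) • X) + (r⁻¹ • e1 + (-(r^2)⁻¹ * (c1/r)) • n) * b))) +
        (e1*e3) * (c1 • ((c3/r) • Y + ((r⁻¹ • n) * ((c3/r) • X) + (r⁻¹ • e3 + (-(r^2)⁻¹ * (c3/r)) • n) * b))
                 - c3 • ((c1/r) • Y + ((r⁻¹ • n) * ((c1/r) • X) + (r⁻¹ • e1 + (-(r^2)⁻¹ * (c1/r)) • n) * b))) +
        (e2*e3) * (c2 • ((c3/r) • Y + ((r⁻¹ • n) * ((c3/r) • X) + (r⁻¹ • e3 + (-(r^2)⁻¹ * (c3/r)) • n) * b))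
                 - c3 • ((c2/r) • Y + ((r⁻¹ • n) * ((c2/r) • X) + (r⁻¹ • e2 + (-(r^2)⁻¹ * (c2/r)) • n) * b))))
      = ((-2) * ((c1*c1+c2*c2+c3*c3)⁻¹ * r⁻¹) * (c1*c1+c2*c2+c3*c3)) • b := by
    obtain ⟨hn0, hn1, hn2, hn3⟩ : n.re = 0 ∧ n.imI = c1 ∧ n.imJ = c2 ∧ n.imK = c3 := by
      subst hn; exact ⟨rfl, rfl, rfl, rfl⟩
    ext <;>
      simp only [Quaternion.re_mul, Quaternion.imI_mul, Quaternion.imJ_mul, Quaternion.imK_mul,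
        Quaternion.re_add, Quaternion.imI_add, Quaternion.imJ_add, Quaternion.imK_add,
        Quaternion.re_neg, Quaternion.imI_neg, Quaternion.imJ_neg, Quaternion.imK_neg,
        Quaternion.re_smul, Quaternion.imI_smul, Quaternion.imJ_smul, Quaternion.imK_smul,
        Quaternion.re_sub, Quaternion.imI_sub, Quaternion.imJ_sub, Quaternion.imK_sub,
        Quaternion.re_one, Quaternion.imI_one, Quaternion.imJ_one, Quaternion.imK_one,
        Quaternion.re_star, Quaternion.imI_star, Quaternion.imJ_star, Quaternion.imK_star,
        e1_re, e1_imI, e1_imJ, e1_imK, e2_re, e2_imI, e2_imJ, e2_imK,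
        e3_re, e3_imI, e3_imJ, e3_imK, smul_eq_mul, hn0, hn1, hn2, hn3] <;>
      ring
  rw [hCF, hGa]
  have h1 : (1 - (c1*c1+c2*c2+c3*c3)*(r⁻¹*r⁻¹)) = 0 := by
    rw [hs]; field_simp; simp
  have h2 : ((-3)*r⁻¹ + (c1*c1+c2*c2+c3*c3)*(r⁻¹*r⁻¹*r⁻¹))
      = ((-2) * ((c1*c1+c2*c2+c3*c3)⁻¹ * r⁻¹) * (c1*c1+c2*c2+c3*c3)) := by
    rw [hs]; field_simp; ring
  rw [h1, h2, zero_smul, zero_add]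

set_option maxHeartbeats 4000000 in
/-- `Df(q) = −(Im q)⁻¹ Γf(q)` for a left slice hyperholomorphic `f`. -/
theorem CF_eq_neg_inv_im_mul_Gamma (U : Set ℍ[ℝ])
    (hUo : IsOpen U) (hUs : AxiallySymmetric U)
    (f : ℍ[ℝ] → ℍ[ℝ]) (α β : ℝ × ℝ → ℍ[ℝ])
    (hslice : IsSliceHyperholomorphic U f α β) :
    ∀ q ∈ U, Quaternion.im q ≠ 0 →
      CF f q = -(Quaternion.im q)⁻¹ * Gammaop f q := by
  intro q hq him
  have hrpos : 0 < Rfun q := Rfun_pos him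
  have hSpos : 0 < Sfun q := Sfun_pos him
  set r := Rfun q with hrdef
  -- the derivative chain
  set LS : ℍ[ℝ] →L[ℝ] ℝ := (2*q.imI) • iL + ((2*q.imJ) • jL + (2*q.imK) • kL) with hLSdef
  have hiI : HasFDerivAt (fun p : ℍ[ℝ] => p.imI) iL q := iL.hasFDerivAt
  have hiJ : HasFDerivAt (fun p : ℍ[ℝ] => p.imJ) jL q := jL.hasFDerivAt
  have hiK : HasFDerivAt (fun p : ℍ[ℝ] => p.imK) kL q := kL.hasFDerivAt
  have hS : HasFDerivAt Sfun LS q := by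
    have h := (hiI.mul hiI).add ((hiJ.mul hiJ).add (hiK.mul hiK))
    have hLS : (q.imI • iL + q.imI • iL) + ((q.imJ • jL + q.imJ • jL) + (q.imK • kL + q.imK • kL))
        = LS := by
      refine ContinuousLinearMap.ext fun w => ?_
      simp only [hLSdef, ContinuousLinearMap.add_apply, ContinuousLinearMap.smul_apply,
        iL_apply, jL_apply, kL_apply, smul_eq_mul]
      ring
    exact hLS ▸ h
  have hR : HasFDerivAt Rfun ((1 / (2 * r)) • LS) q := hS.sqrt hSpos.ne'
  have hinv : HasFDerivAt (fun p => (Rfun p)⁻¹) ((-(r^2)⁻¹) • ((1 / (2 * r)) • LS)) q :=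
    (hasDerivAt_inv hrpos.ne').comp_hasFDerivAt q hR
  have himL : HasFDerivAt (fun p : ℍ[ℝ] => p.im) imL q := imL.hasFDerivAt
  set Lψ : ℍ[ℝ] →L[ℝ] ℍ[ℝ] :=
    r⁻¹ • imL + ((-(r^2)⁻¹) • ((1 / (2 * r)) • LS)).smulRight q.im with hLψdef
  have hψ : HasFDerivAt (fun p => (Rfun p)⁻¹ • p.im) Lψ q := hinv.smul himL
  set Lφ : ℍ[ℝ] →L[ℝ] ℝ × ℝ := reL.prod ((1 / (2 * r)) • LS) with hLφdef
  have hφ : HasFDerivAt (fun p : ℍ[ℝ] => (p.re, Rfun p)) Lφ q := HasFDerivAt.prodMk reL.hasFDerivAt hR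
  set A := fderiv ℝ α (q.re, r) with hAdef
  set B := fderiv ℝ β (q.re, r) with hBdef
  have hαd : HasFDerivAt α A (q.re, r) :=
    (hslice.contDiff_α.differentiable one_ne_zero (q.re, r)).hasFDerivAt
  have hβd : HasFDerivAt β B (q.re, r) :=
    (hslice.contDiff_β.differentiable one_ne_zero (q.re, r)).hasFDerivAt
  have hαφ : HasFDerivAt (fun p : ℍ[ℝ] => α (p.re, Rfun p)) (A.comp Lφ) q := hαd.comp q hφ
  have hβφ : HasFDerivAt (fun p : ℍ[ℝ] => β (p.re, Rfun p)) (B.comp Lφ) q := hβd.comp q hφ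
  have hmul : HasFDerivAt (fun p : ℍ[ℝ] => ((Rfun p)⁻¹ • p.im) * β (p.re, Rfun p))
      ((r⁻¹ • q.im) • (B.comp Lφ) + Lψ.smulRight (β (q.re, r))) q := hψ.mul' hβφ
  have hg : HasFDerivAt
      (fun p : ℍ[ℝ] => α (p.re, Rfun p) + ((Rfun p)⁻¹ • p.im) * β (p.re, Rfun p))
      (A.comp Lφ + ((r⁻¹ • q.im) • (B.comp Lφ) + Lψ.smulRight (β (q.re, r)))) q := hαφ.add hmul
  -- f agrees with g near q
  have hop : IsOpen {p : ℍ[ℝ] | p ∈ U ∧ p.im ≠ 0} :=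
    hUo.inter (isOpen_compl_singleton.preimage Quaternion.continuous_im)
  have hev : f =ᶠ[nhds q]
      (fun p : ℍ[ℝ] => α (p.re, Rfun p) + ((Rfun p)⁻¹ • p.im) * β (p.re, Rfun p)) :=
    Filter.eventuallyEq_of_mem (hop.mem_nhds ⟨hq, him⟩) (fun p hp => f_eq_g hslice hp.1 hp.2)
  have hfder : fderiv ℝ f q
      = A.comp Lφ + ((r⁻¹ • q.im) • (B.comp Lφ) + Lψ.smulRight (β (q.re, r))) := by
    rw [hev.fderiv_eq]; exact hg.fderiv
  -- Cauchy–Riemann relations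
  have hB01 : B ((0:ℝ), (1:ℝ)) = A ((1:ℝ), (0:ℝ)) :=
    (sub_eq_zero.mp (hslice.CR₁ q.re r)).symm
  have hB10 : B ((1:ℝ), (0:ℝ)) = -A ((0:ℝ), (1:ℝ)) :=
    eq_neg_of_add_eq_zero_right (hslice.CR₂ q.re r)
  have hA0x : ∀ x : ℝ, A ((0:ℝ), x) = x • A ((0:ℝ), (1:ℝ)) := by
    intro x
    rw [show ((0:ℝ), x) = x • ((0:ℝ), (1:ℝ)) by simp, map_smul]
  have hB0x : ∀ x : ℝ, B ((0:ℝ), x) = x • B ((0:ℝ), (1:ℝ)) := by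
    intro x
    rw [show ((0:ℝ), x) = x • ((0:ℝ), (1:ℝ)) by simp, map_smul]
  -- values of the derivative
  have him1 : (1:ℍ[ℝ]).im = 0 := by ext <;> simp
  have hime1 : e1.im = e1 := by ext <;> simp
  have hime2 : e2.im = e2 := by ext <;> simp
  have hime3 : e3.im = e3 := by ext <;> simp
  set b := β (q.re, r) with hbdef
  have hsc1 : 1/(2*r) * (2*q.imI) = q.imI/r := by field_simp
  have hsc2 : 1/(2*r) * (2*q.imJ) = q.imJ/r := by field_simp
  have hsc3 : 1/(2*r) * (2*q.imK) = q.imK/r := by field_simp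
  have hD1 : fderiv ℝ f q 1 = A ((1:ℝ), (0:ℝ)) + (r⁻¹ • q.im) * -(A ((0:ℝ), (1:ℝ))) := by
    rw [hfder]
    simp only [ContinuousLinearMap.add_apply, ContinuousLinearMap.coe_comp',
      Function.comp_apply, ContinuousLinearMap.coe_smul', Pi.smul_apply,
      ContinuousLinearMap.smulRight_apply, ContinuousLinearMap.prod_apply,
      ContinuousLinearMap.smul_apply, hLφdef, hLψdef, hLSdef,
      reL_apply, iL_apply, jL_apply, kL_apply, imL_apply,
      Quaternion.re_one, Quaternion.imI_one, Quaternion.imJ_one, Quaternion.imK_one, him1,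
      mul_zero, zero_add, add_zero, smul_zero, zero_smul, smul_eq_mul, mul_one, zero_mul,
      hB10]
  have hDe1 : fderiv ℝ f q e1 =
      (q.imI/r) • A ((0:ℝ),(1:ℝ)) + ((r⁻¹ • q.im) * ((q.imI/r) • A ((1:ℝ),(0:ℝ)))
        + (r⁻¹ • e1 + (-(r^2)⁻¹ * (q.imI/r)) • q.im) * b) := by
    rw [hfder]
    simp only [ContinuousLinearMap.add_apply, ContinuousLinearMap.coe_comp',
      Function.comp_apply, ContinuousLinearMap.coe_smul', Pi.smul_apply,
      ContinuousLinearMap.smulRight_apply, ContinuousLinearMap.prod_apply,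
      ContinuousLinearMap.smul_apply, hLφdef, hLψdef, hLSdef,
      reL_apply, iL_apply, jL_apply, kL_apply, imL_apply,
      e1_re, e1_imI, e1_imJ, e1_imK, hime1,
      mul_zero, zero_add, add_zero, smul_zero, zero_smul, smul_eq_mul, mul_one, zero_mul,
      hsc1]
    rw [hA0x (q.imI/r), hB0x (q.imI/r), hB01]
  have hDe2 : fderiv ℝ f q e2 =
      (q.imJ/r) • A ((0:ℝ),(1:ℝ)) + ((r⁻¹ • q.im) * ((q.imJ/r) • A ((1:ℝ),(0:ℝ)))
        + (r⁻¹ • e2 + (-(r^2)⁻¹ * (q.imJ/r)) • q.im) * b) := by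
    rw [hfder]
    simp only [ContinuousLinearMap.add_apply, ContinuousLinearMap.coe_comp',
      Function.comp_apply, ContinuousLinearMap.coe_smul', Pi.smul_apply,
      ContinuousLinearMap.smulRight_apply, ContinuousLinearMap.prod_apply,
      ContinuousLinearMap.smul_apply, hLφdef, hLψdef, hLSdef,
      reL_apply, iL_apply, jL_apply, kL_apply, imL_apply,
      e2_re, e2_imI, e2_imJ, e2_imK, hime2,
      mul_zero, zero_add, add_zero, smul_zero, zero_smul, smul_eq_mul, mul_one, zero_mul,
      hsc2]
    rw [hA0x (q.imJ/r), hB0x (q.imJ/r), hB01]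
  have hDe3 : fderiv ℝ f q e3 =
      (q.imK/r) • A ((0:ℝ),(1:ℝ)) + ((r⁻¹ • q.im) * ((q.imK/r) • A ((1:ℝ),(0:ℝ)))
        + (r⁻¹ • e3 + (-(r^2)⁻¹ * (q.imK/r)) • q.im) * b) := by
    rw [hfder]
    simp only [ContinuousLinearMap.add_apply, ContinuousLinearMap.coe_comp',
      Function.comp_apply, ContinuousLinearMap.coe_smul', Pi.smul_apply,
      ContinuousLinearMap.smulRight_apply, ContinuousLinearMap.prod_apply,
      ContinuousLinearMap.smul_apply, hLφdef, hLψdef, hLSdef,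
      reL_apply, iL_apply, jL_apply, kL_apply, imL_apply,
      e3_re, e3_imI, e3_imJ, e3_imK, hime3,
      mul_zero, zero_add, add_zero, smul_zero, zero_smul, smul_eq_mul, mul_one, zero_mul,
      hsc3]
    rw [hA0x (q.imK/r), hB0x (q.imK/r), hB01]
  -- final assembly
  have hs : q.imI*q.imI+q.imJ*q.imJ+q.imK*q.imK = r*r := by
    have h1 : r*r = Sfun q := by rw [hrdef, Rfun]; exact Real.mul_self_sqrt hSpos.le
    rw [h1]; simp only [Sfun]; ring
  have hnq : normSq q.im = q.imI*q.imI+q.imJ*q.imJ+q.imK*q.imK := by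
    rw [Quaternion.normSq_def']
    simp only [Quaternion.re_im, Quaternion.imI_im, Quaternion.imJ_im, Quaternion.imK_im]
    ring
  have hinvq : (q.im)⁻¹ = (q.imI*q.imI+q.imJ*q.imJ+q.imK*q.imK)⁻¹ • star q.im := by
    rw [Quaternion.inv_def, hnq]
  have hn : q.im = (⟨0, q.imI, q.imJ, q.imK⟩ : ℍ[ℝ]) := by ext <;> simp
  simp only [CF, Gammaop]
  rw [hD1, hDe1, hDe2, hDe3, hinvq]
  exact keylemma q.imI q.imJ q.imK r hrpos hs q.im
    (A ((1:ℝ),(0:ℝ))) (A ((0:ℝ),(1:ℝ))) b hn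
end
end

section
/- Representation formula for axially polyanalytic functions of order 2: let U ⊆ ℍ be an axially symmetric open set and f : U → ℍ left slice hyperholomorphic. (i) For every q ∈ U∖ℝ, writing u = Re q, v = |Im q|, I_q = Im q/|Im q|, and for every I ∈ 𝕊: D̄f(q) = (∂_{q₀}f(u + I·v) + ∂_{q₀}f(u − I·v)) + I_q·I·(∂_{q₀}f(u − I·v) − ∂_{q₀}f(u + I·v)) + (Im q)⁻¹·I_q·I·(f(u − I·v) − f(u + I·v)), where ∂_{q₀}f denotes the partial derivative of f in the direction 1. (ii) For every u ∈ U ∩ ℝ and every I ∈ 𝕊: D̄f(u + I·v) tends to 4·(f|ℝ)′(u) as v → 0⁺, where (f|ℝ)′(u) is the derivative at u of the restriction of f to U ∩ ℝ. -/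
noncomputable section
open Quaternion

/-- The conjugate Cauchy–Fueter operator `D̄f = ∂₀f − e₁∂₁f − e₂∂₂f − e₃∂₃f`. -/
def CFbar (f : ℍ[ℝ] → ℍ[ℝ]) (q : ℍ[ℝ]) : ℍ[ℝ] :=
  fderiv ℝ f q 1 - e1 * fderiv ℝ f q e1 - e2 * fderiv ℝ f q e2 - e3 * fderiv ℝ f q e3

set_option maxHeartbeats 1000000
set_option synthInstance.maxHeartbeats 1000000

namespace RepAux

/-! ### Linear maps for the quaternion components -/

def reCLM : ℍ[ℝ] →L[ℝ] ℝ :=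
  LinearMap.toContinuousLinearMap
    { toFun := QuaternionAlgebra.re, map_add' := fun _ _ => rfl, map_smul' := fun _ _ => rfl }
def imICLM : ℍ[ℝ] →L[ℝ] ℝ :=
  LinearMap.toContinuousLinearMap
    { toFun := QuaternionAlgebra.imI, map_add' := fun _ _ => rfl, map_smul' := fun _ _ => rfl }
def imJCLM : ℍ[ℝ] →L[ℝ] ℝ :=
  LinearMap.toContinuousLinearMap
    { toFun := QuaternionAlgebra.imJ, map_add' := fun _ _ => rfl, map_smul' := fun _ _ => rfl }
def imKCLM : ℍ[ℝ] →L[ℝ] ℝ :=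
  LinearMap.toContinuousLinearMap
    { toFun := QuaternionAlgebra.imK, map_add' := fun _ _ => rfl, map_smul' := fun _ _ => rfl }
def imCLM : ℍ[ℝ] →L[ℝ] ℍ[ℝ] :=
  LinearMap.toContinuousLinearMap
    { toFun := Quaternion.im, map_add' := fun a b => by simp, map_smul' := fun s a => by simp }

@[simp] lemma reCLM_apply (x : ℍ[ℝ]) : reCLM x = x.re := rfl
@[simp] lemma imICLM_apply (x : ℍ[ℝ]) : imICLM x = x.imI := rfl
@[simp] lemma imJCLM_apply (x : ℍ[ℝ]) : imJCLM x = x.imJ := rfl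
@[simp] lemma imKCLM_apply (x : ℍ[ℝ]) : imKCLM x = x.imK := rfl
@[simp] lemma imCLM_apply (x : ℍ[ℝ]) : imCLM x = Quaternion.im x := rfl

/-! ### Elementary quaternion facts -/

@[simp] lemma e1_re : e1.re = 0 := rfl
@[simp] lemma e1_imI : e1.imI = 1 := rfl
@[simp] lemma e1_imJ : e1.imJ = 0 := rfl
@[simp] lemma e1_imK : e1.imK = 0 := rfl
@[simp] lemma e2_re : e2.re = 0 := rfl
@[simp] lemma e2_imI : e2.imI = 0 := rfl
@[simp] lemma e2_imJ : e2.imJ = 1 := rfl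
@[simp] lemma e2_imK : e2.imK = 0 := rfl
@[simp] lemma e3_re : e3.re = 0 := rfl
@[simp] lemma e3_imI : e3.imI = 0 := rfl
@[simp] lemma e3_imJ : e3.imJ = 0 := rfl
@[simp] lemma e3_imK : e3.imK = 1 := rfl

lemma e1e1 : e1 * e1 = -1 := by
  ext <;> simp [Quaternion.re_mul, Quaternion.imI_mul, Quaternion.imJ_mul, Quaternion.imK_mul]
lemma e2e2 : e2 * e2 = -1 := by
  ext <;> simp [Quaternion.re_mul, Quaternion.imI_mul, Quaternion.imJ_mul, Quaternion.imK_mul]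
lemma e3e3 : e3 * e3 = -1 := by
  ext <;> simp [Quaternion.re_mul, Quaternion.imI_mul, Quaternion.imJ_mul, Quaternion.imK_mul]

lemma im_one : Quaternion.im (1 : ℍ[ℝ]) = 0 := by
  ext <;> simp

lemma im_e1 : Quaternion.im e1 = e1 := by ext <;> simp
lemma im_e2 : Quaternion.im e2 = e2 := by ext <;> simp
lemma im_e3 : Quaternion.im e3 = e3 := by ext <;> simp

lemma im_decomp (q : ℍ[ℝ]) :
    Quaternion.im q = q.imI • e1 + q.imJ • e2 + q.imK • e3 := by
  ext <;> simp [Quaternion.re_smul]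

lemma norm_eq_one_of_normSq (x : ℍ[ℝ]) (h : Quaternion.normSq x = 1) : ‖x‖ = 1 := by
  have h2 : ‖x‖ * ‖x‖ = 1 := by rw [← Quaternion.normSq_eq_norm_mul_self, h]
  nlinarith [norm_nonneg x]

lemma norm_e1 : ‖e1‖ = 1 :=
  norm_eq_one_of_normSq _ (by rw [Quaternion.normSq_def']; norm_num)

lemma im_of_re_eq_zero {x : ℍ[ℝ]} (h : x.re = 0) : Quaternion.im x = x := by
  have := Quaternion.re_add_im x
  rwa [h, Quaternion.coe_zero, zero_add] at this

lemma mul_self_eq_neg_one {x : ℍ[ℝ]} (h : x.re = 0) (hn : ‖x‖ = 1) : x * x = -1 := by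
  have h1 : star x = -x := Quaternion.star_eq_neg.mpr h
  have h2 : x * star x = Quaternion.normSq x := Quaternion.self_mul_star x
  have h3 : Quaternion.normSq x = (1 : ℝ) := by
    rw [Quaternion.normSq_eq_norm_mul_self, hn]; norm_num
  rw [h1, mul_neg] at h2
  rw [h3] at h2
  have h4 : x * x = -((1 : ℝ) : ℍ[ℝ]) := by
    have := congrArg Neg.neg h2
    rw [neg_neg] at this
    rw [this]
  simpa using h4

/-! ### The auxiliary explicit form of a slice function -/

def Nfun (x : ℍ[ℝ]) : ℝ := x.imI * x.imI + x.imJ * x.imJ + x.imK * x.imK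
def rfun (x : ℍ[ℝ]) : ℝ := Real.sqrt (Nfun x)
def gfun (α β : ℝ × ℝ → ℍ[ℝ]) (x : ℍ[ℝ]) : ℍ[ℝ] :=
  α (x.re, rfun x) + (rfun x)⁻¹ • (Quaternion.im x * β (x.re, rfun x))

lemma normSq_im (x : ℍ[ℝ]) : Quaternion.normSq (Quaternion.im x) = Nfun x := by
  rw [Quaternion.normSq_def']
  simp [Nfun, sq]
  try ring

lemma rfun_eq (x : ℍ[ℝ]) : rfun x = ‖Quaternion.im x‖ := by
  rw [rfun, ← normSq_im, Quaternion.normSq_eq_norm_mul_self,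
    Real.sqrt_mul_self (norm_nonneg _)]

lemma rfun_pos {x : ℍ[ℝ]} (h : Quaternion.im x ≠ 0) : 0 < rfun x := by
  rw [rfun_eq]; exact norm_pos_iff.mpr h

theorem fderiv_g_eval {α β : ℝ × ℝ → ℍ[ℝ]} (hα : ContDiff ℝ 1 α) (hβ : ContDiff ℝ 1 β)
    {f : ℍ[ℝ] → ℍ[ℝ]} {q : ℍ[ℝ]} (hq : Quaternion.im q ≠ 0)
    (hfg : f =ᶠ[nhds q] gfun α β) (w : ℍ[ℝ]) (t : ℝ)
    (ht : t = (rfun q)⁻¹ * (q.imI * w.imI + q.imJ * w.imJ + q.imK * w.imK)) :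
    fderiv ℝ f q w =
      fderiv ℝ α (q.re, rfun q) (w.re, t)
      + (-(((rfun q) ^ 2)⁻¹ * t) • (Quaternion.im q * β (q.re, rfun q))
      + (rfun q)⁻¹ • (Quaternion.im w * β (q.re, rfun q)
          + Quaternion.im q * fderiv ℝ β (q.re, rfun q) (w.re, t))) := by
  have hv : 0 < rfun q := rfun_pos hq
  have hN : 0 < Nfun q := Real.sqrt_pos.mp hv
  have hiI : HasFDerivAt (fun x : ℍ[ℝ] => x.imI) imICLM q := imICLM.hasFDerivAt
  have hiJ : HasFDerivAt (fun x : ℍ[ℝ] => x.imJ) imJCLM q := imJCLM.hasFDerivAt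
  have hiK : HasFDerivAt (fun x : ℍ[ℝ] => x.imK) imKCLM q := imKCLM.hasFDerivAt
  have hNd : HasFDerivAt Nfun
      ((q.imI • imICLM + q.imI • imICLM) + (q.imJ • imJCLM + q.imJ • imJCLM)
        + (q.imK • imKCLM + q.imK • imKCLM)) q :=
    ((hiI.mul hiI).add (hiJ.mul hiJ)).add (hiK.mul hiK)
  have hrd : HasFDerivAt rfun ((1 / (2 * Real.sqrt (Nfun q))) •
      ((q.imI • imICLM + q.imI • imICLM) + (q.imJ • imJCLM + q.imJ • imJCLM)
        + (q.imK • imKCLM + q.imK • imKCLM))) q :=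
    (Real.hasDerivAt_sqrt hN.ne').comp_hasFDerivAt q hNd
  set dN := ((q.imI • imICLM + q.imI • imICLM) + (q.imJ • imJCLM + q.imJ • imJCLM)
        + (q.imK • imKCLM + q.imK • imKCLM)) with hdN
  have hπ : HasFDerivAt (fun x : ℍ[ℝ] => (x.re, rfun x))
      (reCLM.prod ((1 / (2 * Real.sqrt (Nfun q))) • dN)) q := reCLM.hasFDerivAt.prodMk hrd
  set Pr := reCLM.prod ((1 / (2 * Real.sqrt (Nfun q))) • dN) with hPr
  have hαd : HasFDerivAt α (fderiv ℝ α (q.re, rfun q)) (q.re, rfun q) :=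
    (hα.differentiable one_ne_zero _).hasFDerivAt
  have hβd : HasFDerivAt β (fderiv ℝ β (q.re, rfun q)) (q.re, rfun q) :=
    (hβ.differentiable one_ne_zero _).hasFDerivAt
  have hαc : HasFDerivAt (fun x : ℍ[ℝ] => α (x.re, rfun x))
      ((fderiv ℝ α (q.re, rfun q)).comp Pr) q := hαd.comp q hπ
  have hβc : HasFDerivAt (fun x : ℍ[ℝ] => β (x.re, rfun x))
      ((fderiv ℝ β (q.re, rfun q)).comp Pr) q := hβd.comp q hπ
  have hinv : HasFDerivAt (fun x : ℍ[ℝ] => (rfun x)⁻¹)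
      ((-(rfun q ^ 2)⁻¹) • ((1 / (2 * Real.sqrt (Nfun q))) • dN)) q :=
    (hasDerivAt_inv hv.ne').comp_hasFDerivAt q hrd
  have himd : HasFDerivAt Quaternion.im imCLM q := imCLM.hasFDerivAt
  have hmul := himd.mul' hβc
  have hsm := hinv.smul (𝕜' := ℝ) hmul
  have htot : HasFDerivAt (gfun α β) _ q := hαc.add hsm
  have hfd := hfg.fderiv_eq (𝕜 := ℝ)
  rw [hfd, htot.fderiv]
  simp only [ContinuousLinearMap.add_apply, ContinuousLinearMap.coe_comp', Function.comp_apply,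
    ContinuousLinearMap.prod_apply, ContinuousLinearMap.smul_apply,
    ContinuousLinearMap.smulRight_apply, ContinuousLinearMap.coe_smul',
    Pi.smul_apply, reCLM_apply, imICLM_apply, imJCLM_apply, imKCLM_apply, imCLM_apply,
    smul_eq_mul]
  have hdNw : dN w = 2 * (q.imI * w.imI + q.imJ * w.imJ + q.imK * w.imK) := by
    rw [hdN]
    simp only [ContinuousLinearMap.add_apply, ContinuousLinearMap.smul_apply,
      imICLM_apply, imJCLM_apply, imKCLM_apply, smul_eq_mul]
    ring
  have hsqrt : Real.sqrt (Nfun q) = rfun q := rfl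
  have ht2 : 1 / (2 * Real.sqrt (Nfun q)) * dN w = t := by
    rw [hdNw, hsqrt, ht]
    field_simp
  have hPw : Pr w = (w.re, t) := by
    rw [hPr]
    rw [ContinuousLinearMap.prod_apply]
    simp only [ContinuousLinearMap.smul_apply, reCLM_apply, smul_eq_mul]
    rw [ht2]
  rw [hPw]
  rw [show -(rfun q ^ 2)⁻¹ * (1 / (2 * Real.sqrt (Nfun q)) * dN w) = -((rfun q ^ 2)⁻¹ * t) by
    rw [ht2]; ring]
  simp only [op_smul_eq_mul, Pi.mul_apply]
  module

lemma quat_combine (v q1 q2 q3 : ℝ) (hv : v ≠ 0)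
    (A C b imq : ℍ[ℝ])
    (hsq : imq * imq = ((-(v*v) : ℝ) : ℍ[ℝ]))
    (hdec : ∀ X : ℍ[ℝ], q1 • (e1*X) + q2 • (e2*X) + q3 • (e3*X) = imq * X) :
    (A + ((-(((v:ℝ)^2)⁻¹ * 0)) • (imq * b) + v⁻¹ • ((0:ℍ[ℝ]) * b + imq * (-C))))
    - e1 * ((v⁻¹*q1) • C + ((-((v^2)⁻¹ * (v⁻¹*q1))) • (imq * b)
        + v⁻¹ • (e1 * b + imq * ((v⁻¹*q1) • A))))
    - e2 * ((v⁻¹*q2) • C + ((-((v^2)⁻¹ * (v⁻¹*q2))) • (imq * b)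
        + v⁻¹ • (e2 * b + imq * ((v⁻¹*q2) • A))))
    - e3 * ((v⁻¹*q3) • C + ((-((v^2)⁻¹ * (v⁻¹*q3))) • (imq * b)
        + v⁻¹ • (e3 * b + imq * ((v⁻¹*q3) • A))))
    = (2:ℝ) • A - (2:ℝ) • (v⁻¹ • (imq * C)) + (2*v⁻¹) • b := by
  have hmm : ∀ X : ℍ[ℝ], imq * (imq * X) = (-(v*v)) • X := by
    intro X
    rw [← mul_assoc, hsq, Quaternion.coe_mul_eq_smul]
  have hB : ∀ (e : ℍ[ℝ]), e * e = -1 → ∀ t : ℝ,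
      e * (t • C + ((-((v^2)⁻¹ * t)) • (imq * b) + v⁻¹ • (e * b + imq * (t • A))))
      = t • (e*C) - ((v^2)⁻¹ * t) • (e*(imq*b)) - v⁻¹ • b + (v⁻¹*t) • (e*(imq*A)) := by
    intro e he t
    have h1 : e * (e * b) = -b := by rw [← mul_assoc, he, neg_one_mul]
    simp only [mul_add, mul_neg, mul_smul_comm, smul_add, smul_smul, h1, neg_smul, smul_neg]
    module
  rw [hB e1 e1e1 (v⁻¹*q1), hB e2 e2e2 (v⁻¹*q2), hB e3 e3e3 (v⁻¹*q3)]
  have hgC : (v⁻¹*q1) • (e1*C) + (v⁻¹*q2) • (e2*C) + (v⁻¹*q3) • (e3*C)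
      = v⁻¹ • (imq * C) := by rw [← hdec C]; module
  have hgb : ((v^2)⁻¹*(v⁻¹*q1)) • (e1*(imq*b)) + ((v^2)⁻¹*(v⁻¹*q2)) • (e2*(imq*b))
      + ((v^2)⁻¹*(v⁻¹*q3)) • (e3*(imq*b)) = -(v⁻¹) • b := by
    have hd := hdec (imq*b)
    have h2 : ((v^2)⁻¹*v⁻¹) • (q1 • (e1*(imq*b)) + q2 • (e2*(imq*b)) + q3 • (e3*(imq*b)))
        = ((v^2)⁻¹*v⁻¹) • (imq * (imq*b)) := by rw [hd]
    rw [hmm] at h2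
    rw [show ((v^2)⁻¹*(v⁻¹*q1)) • (e1*(imq*b)) + ((v^2)⁻¹*(v⁻¹*q2)) • (e2*(imq*b))
      + ((v^2)⁻¹*(v⁻¹*q3)) • (e3*(imq*b))
      = ((v^2)⁻¹*v⁻¹) • (q1 • (e1*(imq*b)) + q2 • (e2*(imq*b)) + q3 • (e3*(imq*b))) from by
        module]
    have hsc : ((v^2)⁻¹*v⁻¹) * -(v*v) = -v⁻¹ := by field_simp; try ring; try tauto
    rw [h2, smul_smul, hsc]
  have hgA : (v⁻¹*(v⁻¹*q1)) • (e1*(imq*A)) + (v⁻¹*(v⁻¹*q2)) • (e2*(imq*A))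
      + (v⁻¹*(v⁻¹*q3)) • (e3*(imq*A)) = -A := by
    have hd := hdec (imq*A)
    have h2 : (v⁻¹*v⁻¹) • (q1 • (e1*(imq*A)) + q2 • (e2*(imq*A)) + q3 • (e3*(imq*A)))
        = (v⁻¹*v⁻¹) • (imq * (imq*A)) := by rw [hd]
    rw [hmm] at h2
    rw [show (v⁻¹*(v⁻¹*q1)) • (e1*(imq*A)) + (v⁻¹*(v⁻¹*q2)) • (e2*(imq*A))
      + (v⁻¹*(v⁻¹*q3)) • (e3*(imq*A))
      = (v⁻¹*v⁻¹) • (q1 • (e1*(imq*A)) + q2 • (e2*(imq*A)) + q3 • (e3*(imq*A))) from by module]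
    have hsc : (v⁻¹*v⁻¹) * -(v*v) = -1 := by field_simp; try ring; try tauto
    rw [h2, smul_smul, hsc, neg_one_smul]
  have expand : ∀ X1 X2 X3 Y1 Y2 Y3 Z1 Z2 Z3 : ℍ[ℝ],
      (A + ((-(((v:ℝ)^2)⁻¹ * 0)) • (imq * b) + v⁻¹ • ((0:ℍ[ℝ]) * b + imq * (-C))))
      - (X1 - Y1 - v⁻¹ • b + Z1) - (X2 - Y2 - v⁻¹ • b + Z2) - (X3 - Y3 - v⁻¹ • b + Z3)
      = A - v⁻¹ • (imq * C) + (3*v⁻¹) • b - (X1+X2+X3) + (Y1+Y2+Y3) - (Z1+Z2+Z3) := by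
    intros
    simp only [mul_neg, zero_mul, smul_add, smul_neg, zero_add, mul_zero, neg_zero, zero_smul,
      add_zero]
    module
  rw [expand]
  rw [hgC, hgb, hgA]
  match_scalars
  · ring
  · ring
  · field_simp
    ring

lemma beta_zero {U f α β} (hslice : IsSliceHyperholomorphic U f α β) (u : ℝ) :
    β (u, 0) = 0 := by
  have h := hslice.odd_β u 0
  rw [neg_zero] at h
  have h2 : (2:ℝ) • β (u, 0) = 0 := by
    rw [two_smul]
    nth_rewrite 1 [h]
    exact neg_add_cancel _
  have := smul_eq_zero.mp h2
  rcases this with h3 | h3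
  · norm_num at h3
  · exact h3

lemma f_eq_g {U f α β} (hslice : IsSliceHyperholomorphic U f α β) :
    Set.EqOn f (gfun α β) U := by
  intro x hx
  by_cases him : Quaternion.im x = 0
  · have hx0 : ((x.re : ℝ) : ℍ[ℝ]) = x := by
      conv_rhs => rw [← Quaternion.re_add_im x]
      rw [him, add_zero]
    have hmem : ((x.re : ℝ) : ℍ[ℝ]) + (0:ℝ) • e1 ∈ U := by
      rw [zero_smul, add_zero, hx0]; exact hx
    have hrep := hslice.rep x.re 0 e1 e1_re norm_e1 hmem
    rw [zero_smul, add_zero, hx0] at hrep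
    have hr0 : rfun x = 0 := by rw [rfun_eq, him, norm_zero]
    rw [gfun, hr0, hrep, beta_zero hslice, mul_zero, him, zero_mul, smul_zero, add_zero]
    try rw [add_zero]
  · have hv : 0 < ‖Quaternion.im x‖ := norm_pos_iff.mpr him
    set v := ‖Quaternion.im x‖ with hvdef
    have hIre : ((v⁻¹ • Quaternion.im x : ℍ[ℝ])).re = 0 := by
      simp [Quaternion.re_smul]
    have hInorm : ‖(v⁻¹ • Quaternion.im x : ℍ[ℝ])‖ = 1 := by
      rw [norm_smul, Real.norm_eq_abs, abs_inv, abs_of_pos hv, ← hvdef,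
        inv_mul_cancel₀ hv.ne']
    have hpt : ((x.re : ℝ) : ℍ[ℝ]) + v • (v⁻¹ • Quaternion.im x) = x := by
      rw [smul_smul, mul_inv_cancel₀ hv.ne', one_smul, Quaternion.re_add_im]
    have hmem : ((x.re : ℝ) : ℍ[ℝ]) + v • (v⁻¹ • Quaternion.im x) ∈ U := by
      rw [hpt]; exact hx
    have hrep := hslice.rep x.re v _ hIre hInorm hmem
    rw [hpt] at hrep
    rw [gfun, rfun_eq, ← hvdef, hrep, smul_mul_assoc]

lemma hdir0 {γ : ℝ × ℝ → ℍ[ℝ]} (p : ℝ × ℝ) (t : ℝ) :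
    fderiv ℝ γ p ((0:ℝ), t) = t • fderiv ℝ γ p ((0:ℝ), (1:ℝ)) := by
  have h : ((0:ℝ), t) = t • (((0:ℝ), (1:ℝ)) : ℝ × ℝ) := by
    simp [Prod.smul_mk]
  rw [h, map_smul]

theorem master {U : Set ℍ[ℝ]} {f : ℍ[ℝ] → ℍ[ℝ]} {α β : ℝ × ℝ → ℍ[ℝ]}
    (hUo : IsOpen U) (hslice : IsSliceHyperholomorphic U f α β)
    {q : ℍ[ℝ]} (hq : q ∈ U) (him : Quaternion.im q ≠ 0) :
    CFbar f q = (2:ℝ) • fderiv ℝ α (q.re, rfun q) ((1:ℝ), (0:ℝ))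
      - (2:ℝ) • ((rfun q)⁻¹ • (Quaternion.im q * fderiv ℝ α (q.re, rfun q) ((0:ℝ), (1:ℝ))))
      + (2 * (rfun q)⁻¹) • β (q.re, rfun q) := by
  have hα := hslice.contDiff_α
  have hβ := hslice.contDiff_β
  have hev : f =ᶠ[nhds q] gfun α β :=
    Filter.eventuallyEq_of_mem (hUo.mem_nhds hq) (f_eq_g hslice)
  have hv : 0 < rfun q := rfun_pos him
  have hCR1 : fderiv ℝ β (q.re, rfun q) ((0:ℝ), (1:ℝ)) =
      fderiv ℝ α (q.re, rfun q) ((1:ℝ), (0:ℝ)) :=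
    (sub_eq_zero.mp (hslice.CR₁ q.re (rfun q))).symm
  have hCR2 : fderiv ℝ β (q.re, rfun q) ((1:ℝ), (0:ℝ)) =
      -fderiv ℝ α (q.re, rfun q) ((0:ℝ), (1:ℝ)) :=
    eq_neg_of_add_eq_zero_right (hslice.CR₂ q.re (rfun q))
  have h1 := fderiv_g_eval hα hβ him hev 1 0 (by simp)
  have he1 := fderiv_g_eval hα hβ him hev e1 ((rfun q)⁻¹ * q.imI) (by simp)
  have he2 := fderiv_g_eval hα hβ him hev e2 ((rfun q)⁻¹ * q.imJ) (by simp)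
  have he3 := fderiv_g_eval hα hβ him hev e3 ((rfun q)⁻¹ * q.imK) (by simp)
  rw [Quaternion.re_one, im_one, hCR2] at h1
  rw [e1_re, im_e1, hdir0 (γ := α) (q.re, rfun q) ((rfun q)⁻¹ * q.imI),
    hdir0 (γ := β) (q.re, rfun q) ((rfun q)⁻¹ * q.imI), hCR1] at he1
  rw [e2_re, im_e2, hdir0 (γ := α) (q.re, rfun q) ((rfun q)⁻¹ * q.imJ),
    hdir0 (γ := β) (q.re, rfun q) ((rfun q)⁻¹ * q.imJ), hCR1] at he2
  rw [e3_re, im_e3, hdir0 (γ := α) (q.re, rfun q) ((rfun q)⁻¹ * q.imK),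
    hdir0 (γ := β) (q.re, rfun q) ((rfun q)⁻¹ * q.imK), hCR1] at he3
  unfold CFbar
  rw [h1, he1, he2, he3]
  have hsq : Quaternion.im q * Quaternion.im q = ((-(rfun q * rfun q) : ℝ) : ℍ[ℝ]) := by
    have h := Quaternion.im_sq q
    rw [sq] at h
    rw [h, rfun_eq, ← Quaternion.normSq_eq_norm_mul_self, Quaternion.coe_neg]
  have hdec : ∀ X : ℍ[ℝ], q.imI • (e1*X) + q.imJ • (e2*X) + q.imK • (e3*X)
      = Quaternion.im q * X := by
    intro X
    conv_rhs => rw [im_decomp q]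
    simp only [add_mul, smul_mul_assoc]
  exact quat_combine (rfun q) q.imI q.imJ q.imK hv.ne' _ _ _ _ hsq hdec

theorem fderiv_one {U : Set ℍ[ℝ]} {f : ℍ[ℝ] → ℍ[ℝ]} {α β : ℝ × ℝ → ℍ[ℝ]}
    (hUo : IsOpen U) (hslice : IsSliceHyperholomorphic U f α β)
    {p : ℍ[ℝ]} (hp : p ∈ U) (him : Quaternion.im p ≠ 0) :
    fderiv ℝ f p 1 = fderiv ℝ α (p.re, rfun p) ((1:ℝ), (0:ℝ))
      + (rfun p)⁻¹ • (Quaternion.im p * fderiv ℝ β (p.re, rfun p) ((1:ℝ), (0:ℝ))) := by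
  have hev : f =ᶠ[nhds p] gfun α β :=
    Filter.eventuallyEq_of_mem (hUo.mem_nhds hp) (f_eq_g hslice)
  have h1 := fderiv_g_eval hslice.contDiff_α hslice.contDiff_β him hev 1 0 (by simp)
  rw [Quaternion.re_one, im_one] at h1
  rw [h1]
  simp only [mul_zero, neg_zero, zero_smul, zero_add, zero_mul]

lemma final_combine (v : ℝ) (hv : v ≠ 0) (A C b a I Iq : ℍ[ℝ])
    (hI : I * I = -1) (hIq : Iq * Iq = -1) :
    (2:ℝ) • A - (2:ℝ) • v⁻¹ • (v • Iq * C) + (2*v⁻¹) • b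
    = A + I * -C + (A + -I * -C) + Iq * I * (A + -I * -C - (A + I * -C))
      + -v⁻¹ • Iq * Iq * I * (a + -I * b - (a + I * b)) := by
  have hIIC : ∀ X : ℍ[ℝ], I * (I * X) = -X := fun X => by
    rw [← mul_assoc, hI, neg_one_mul]
  have h1 : A + -I * -C - (A + I * -C) = (2:ℝ) • (I * C) := by
    simp only [neg_mul, mul_neg, neg_neg]
    module
  have h2 : a + -I * b - (a + I * b) = -((2:ℝ) • (I * b)) := by
    simp only [neg_mul]
    module
  rw [h1, h2]
  have h3 : Iq * I * ((2:ℝ) • (I * C)) = -((2:ℝ) • (Iq * C)) := by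
    rw [mul_smul_comm, mul_assoc, hIIC, mul_neg, smul_neg]
  have h40 : -v⁻¹ • Iq * Iq = (v⁻¹ : ℝ) • (1:ℍ[ℝ]) := by
    rw [smul_mul_assoc, hIq]
    module
  have h4 : -v⁻¹ • Iq * Iq * I * -((2:ℝ) • (I * b)) = (2*v⁻¹) • b := by
    rw [h40, smul_mul_assoc, one_mul, mul_neg, mul_smul_comm, smul_mul_assoc, hIIC]
    module
  rw [h3, h4]
  have h5 : v⁻¹ • (v • Iq * C) = Iq * C := by
    rw [smul_mul_assoc, smul_smul, inv_mul_cancel₀ hv, one_smul]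
  rw [h5]
  simp only [mul_neg, neg_mul, neg_neg]
  module

theorem part_one (U : Set ℍ[ℝ])
    (hUo : IsOpen U) (hUs : AxiallySymmetric U)
    (f : ℍ[ℝ] → ℍ[ℝ]) (α β : ℝ × ℝ → ℍ[ℝ])
    (hslice : IsSliceHyperholomorphic U f α β) :
    ∀ q ∈ U, Quaternion.im q ≠ 0 → ∀ I : ℍ[ℝ], I.re = 0 → ‖I‖ = 1 →
      CFbar f q =
        (fderiv ℝ f ((q.re : ℍ[ℝ]) + ‖Quaternion.im q‖ • I) 1 +
          fderiv ℝ f ((q.re : ℍ[ℝ]) - ‖Quaternion.im q‖ • I) 1) +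
        ((‖Quaternion.im q‖)⁻¹ • Quaternion.im q) * I *
          (fderiv ℝ f ((q.re : ℍ[ℝ]) - ‖Quaternion.im q‖ • I) 1 -
            fderiv ℝ f ((q.re : ℍ[ℝ]) + ‖Quaternion.im q‖ • I) 1) +
        (Quaternion.im q)⁻¹ * ((‖Quaternion.im q‖)⁻¹ • Quaternion.im q) * I *
          (f ((q.re : ℍ[ℝ]) - ‖Quaternion.im q‖ • I) -
            f ((q.re : ℍ[ℝ]) + ‖Quaternion.im q‖ • I)) := by
  intro q hq him I hIre hInorm
  have hv : 0 < ‖Quaternion.im q‖ := norm_pos_iff.mpr him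
  set v : ℝ := ‖Quaternion.im q‖ with hvdef
  set Iq : ℍ[ℝ] := v⁻¹ • Quaternion.im q with hIqdef
  have hIqre : Iq.re = 0 := by simp [hIqdef, Quaternion.re_smul]
  have hIqnorm : ‖Iq‖ = 1 := by
    rw [hIqdef, norm_smul, Real.norm_eq_abs, abs_inv, abs_of_pos hv, ← hvdef,
      inv_mul_cancel₀ hv.ne']
  have hqpt : ((q.re : ℝ) : ℍ[ℝ]) + v • Iq = q := by
    rw [hIqdef, smul_smul, mul_inv_cancel₀ hv.ne', one_smul, Quaternion.re_add_im]
  have hIne : I ≠ 0 := by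
    intro h; rw [h, norm_zero] at hInorm; norm_num at hInorm
  have hppU : ((q.re : ℝ) : ℍ[ℝ]) + v • I ∈ U :=
    hUs q.re v Iq I hIqre hIqnorm hIre hInorm (by rw [hqpt]; exact hq)
  have hpm_eq : ((q.re : ℝ) : ℍ[ℝ]) - v • I = ((q.re : ℝ) : ℍ[ℝ]) + v • (-I) := by
    rw [smul_neg, ← sub_eq_add_neg]
  have hpmU : ((q.re : ℝ) : ℍ[ℝ]) - v • I ∈ U := by
    rw [hpm_eq]
    exact hUs q.re v Iq (-I) hIqre hIqnorm (by simp [hIre]) (by rw [norm_neg, hInorm])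
      (by rw [hqpt]; exact hq)
  -- components of the two points
  have hre_pp : (((q.re : ℝ) : ℍ[ℝ]) + v • I).re = q.re := by
    simp [Quaternion.re_smul, hIre]
  have him_pp : Quaternion.im (((q.re : ℝ) : ℍ[ℝ]) + v • I) = v • I := by
    have h := im_of_re_eq_zero hIre
    simp [Quaternion.im_coe, h]
  have hnorm_pp : ‖Quaternion.im (((q.re : ℝ) : ℍ[ℝ]) + v • I)‖ = v := by
    rw [him_pp, norm_smul, Real.norm_eq_abs, abs_of_pos hv, hInorm, mul_one]
  have him_pp0 : Quaternion.im (((q.re : ℝ) : ℍ[ℝ]) + v • I) ≠ 0 := by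
    rw [him_pp]; exact smul_ne_zero hv.ne' hIne
  have hre_pm : (((q.re : ℝ) : ℍ[ℝ]) - v • I).re = q.re := by
    rw [hpm_eq]; simp [Quaternion.re_smul, hIre]
  have him_pm : Quaternion.im (((q.re : ℝ) : ℍ[ℝ]) - v • I) = v • (-I) := by
    rw [hpm_eq]
    simp [Quaternion.im_coe, im_of_re_eq_zero hIre]
  have hnorm_pm : ‖Quaternion.im (((q.re : ℝ) : ℍ[ℝ]) - v • I)‖ = v := by
    rw [him_pm, norm_smul, Real.norm_eq_abs, abs_of_pos hv, norm_neg, hInorm, mul_one]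
  have him_pm0 : Quaternion.im (((q.re : ℝ) : ℍ[ℝ]) - v • I) ≠ 0 := by
    rw [him_pm]
    exact smul_ne_zero hv.ne' (by simpa using hIne)
  -- values of f
  have hfpp : f (((q.re : ℝ) : ℍ[ℝ]) + v • I) = α (q.re, v) + I * β (q.re, v) :=
    hslice.rep q.re v I hIre hInorm hppU
  have hfpm : f (((q.re : ℝ) : ℍ[ℝ]) - v • I) = α (q.re, v) + (-I) * β (q.re, v) := by
    rw [hpm_eq]
    exact hslice.rep q.re v (-I) (by simp [hIre]) (by rw [norm_neg, hInorm])
      (by rw [← hpm_eq]; exact hpmU)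
  -- derivatives of f in the real direction
  have hCR2 : fderiv ℝ β (q.re, v) ((1:ℝ), (0:ℝ)) = -fderiv ℝ α (q.re, v) ((0:ℝ), (1:ℝ)) :=
    eq_neg_of_add_eq_zero_right (hslice.CR₂ q.re v)
  have hrfun_pp : rfun (((q.re : ℝ) : ℍ[ℝ]) + v • I) = v := by rw [rfun_eq, hnorm_pp]
  have hrfun_pm : rfun (((q.re : ℝ) : ℍ[ℝ]) - v • I) = v := by rw [rfun_eq, hnorm_pm]
  have hdpp : fderiv ℝ f (((q.re : ℝ) : ℍ[ℝ]) + v • I) 1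
      = fderiv ℝ α (q.re, v) ((1:ℝ), (0:ℝ)) + I * (-fderiv ℝ α (q.re, v) ((0:ℝ), (1:ℝ))) := by
    rw [fderiv_one hUo hslice hppU him_pp0, hrfun_pp, hre_pp, him_pp, hCR2,
      smul_mul_assoc, smul_smul, inv_mul_cancel₀ hv.ne', one_smul]
  have hdpm : fderiv ℝ f (((q.re : ℝ) : ℍ[ℝ]) - v • I) 1
      = fderiv ℝ α (q.re, v) ((1:ℝ), (0:ℝ)) + (-I) * (-fderiv ℝ α (q.re, v) ((0:ℝ), (1:ℝ))) := by
    rw [fderiv_one hUo hslice hpmU him_pm0, hrfun_pm, hre_pm, him_pm, hCR2,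
      smul_mul_assoc, smul_smul, inv_mul_cancel₀ hv.ne', one_smul]
  -- inverse of im q
  have hnormSq : Quaternion.normSq (Quaternion.im q) = v * v := by
    rw [Quaternion.normSq_eq_norm_mul_self]
  have hqinv : (Quaternion.im q)⁻¹ = (-(v⁻¹)) • Iq := by
    rw [Quaternion.inv_def, Quaternion.star_eq_neg.mpr (Quaternion.re_im q), hnormSq,
      hIqdef, smul_neg, ← neg_smul, smul_smul]
    congr 1
    field_simp
  have hmaster := master hUo hslice hq him
  rw [rfun_eq, ← hvdef] at hmaster
  rw [hmaster, hdpp, hdpm, hfpp, hfpm, hqinv]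
  have hImq : Quaternion.im q = v • Iq := by
    rw [hIqdef, smul_smul, mul_inv_cancel₀ hv.ne', one_smul]
  rw [hImq]
  exact final_combine v hv.ne' _ _ _ _ I Iq (mul_self_eq_neg_one hIre hInorm)
    (mul_self_eq_neg_one hIqre hIqnorm)

theorem part_two (U : Set ℍ[ℝ])
    (hUo : IsOpen U) (hUs : AxiallySymmetric U)
    (f : ℍ[ℝ] → ℍ[ℝ]) (α β : ℝ × ℝ → ℍ[ℝ])
    (hslice : IsSliceHyperholomorphic U f α β) :
    ∀ u : ℝ, (u : ℍ[ℝ]) ∈ U → ∀ I : ℍ[ℝ], I.re = 0 → ‖I‖ = 1 →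
      Filter.Tendsto (fun v : ℝ => CFbar f ((u : ℍ[ℝ]) + v • I))
        (nhdsWithin 0 (Set.Ioi 0))
        (nhds ((4 : ℝ) • deriv (fun t : ℝ => f (t : ℍ[ℝ])) u)) := by
  intro u hu I hIre hInorm
  have hα := hslice.contDiff_α
  have hβ := hslice.contDiff_β
  have hIne : I ≠ 0 := by
    intro h; rw [h, norm_zero] at hInorm; norm_num at hInorm
  -- eventual membership in U
  have hcont : Continuous (fun v : ℝ => ((u : ℝ) : ℍ[ℝ]) + v • I) := by
    apply continuous_const.add
    exact continuous_id.smul continuous_const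
  have hpt0 : ((u : ℝ) : ℍ[ℝ]) + (0:ℝ) • I = ((u : ℝ) : ℍ[ℝ]) := by simp
  have hpre : (fun v : ℝ => ((u : ℝ) : ℍ[ℝ]) + v • I) ⁻¹' U ∈ nhds (0:ℝ) := by
    apply hcont.continuousAt.preimage_mem_nhds
    rw [hpt0]
    exact hUo.mem_nhds hu
  have hU_ev : ∀ᶠ v in nhds (0:ℝ), ((u : ℝ) : ℍ[ℝ]) + v • I ∈ U :=
    Filter.eventually_of_mem hpre fun v hv => hv
  -- the explicit formula, eventually on (0, ∞)
  have hev : ∀ᶠ v in nhdsWithin 0 (Set.Ioi 0),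
      CFbar f (((u : ℝ) : ℍ[ℝ]) + v • I)
        = (2:ℝ) • fderiv ℝ α (u, v) ((1:ℝ),(0:ℝ))
          - (2:ℝ) • (I * fderiv ℝ α (u, v) ((0:ℝ),(1:ℝ)))
          + (2:ℝ) • (v⁻¹ • β (u, v)) := by
    filter_upwards [hU_ev.filter_mono nhdsWithin_le_nhds, self_mem_nhdsWithin] with v hvU hv0
    have hv : (0:ℝ) < v := hv0
    have hre_p : (((u : ℝ) : ℍ[ℝ]) + v • I).re = u := by
      simp [Quaternion.re_smul, hIre]
    have him_p : Quaternion.im (((u : ℝ) : ℍ[ℝ]) + v • I) = v • I := by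
      simp [Quaternion.im_coe, im_of_re_eq_zero hIre]
    have him_p0 : Quaternion.im (((u : ℝ) : ℍ[ℝ]) + v • I) ≠ 0 := by
      rw [him_p]; exact smul_ne_zero hv.ne' hIne
    have hrfun_p : rfun (((u : ℝ) : ℍ[ℝ]) + v • I) = v := by
      rw [rfun_eq, him_p, norm_smul, Real.norm_eq_abs, abs_of_pos hv, hInorm, mul_one]
    rw [master hUo hslice hvU him_p0, hrfun_p, hre_p, him_p]
    rw [show v⁻¹ • (v • I * fderiv ℝ α (u, v) ((0:ℝ),(1:ℝ)))
        = I * fderiv ℝ α (u, v) ((0:ℝ),(1:ℝ)) by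
      rw [smul_mul_assoc, smul_smul, inv_mul_cancel₀ hv.ne', one_smul]]
    rw [mul_smul]
  -- limits of the three pieces
  have hcd : Continuous fun p : ℝ × ℝ => fderiv ℝ α p := hα.continuous_fderiv one_ne_zero
  have hcurve : Continuous fun v : ℝ => ((u : ℝ), v) := continuous_const.prodMk continuous_id
  have T1 : Filter.Tendsto (fun v : ℝ => fderiv ℝ α (u, v) ((1:ℝ),(0:ℝ))) (nhds 0)
      (nhds (fderiv ℝ α (u, 0) ((1:ℝ),(0:ℝ)))) := by
    exact ((ContinuousLinearMap.apply ℝ ℍ[ℝ] (((1:ℝ),(0:ℝ)))).continuous.comp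
      (hcd.comp hcurve)).tendsto 0
  have T2 : Filter.Tendsto (fun v : ℝ => fderiv ℝ α (u, v) ((0:ℝ),(1:ℝ))) (nhds 0)
      (nhds (fderiv ℝ α (u, 0) ((0:ℝ),(1:ℝ)))) := by
    exact ((ContinuousLinearMap.apply ℝ ℍ[ℝ] (((0:ℝ),(1:ℝ)))).continuous.comp
      (hcd.comp hcurve)).tendsto 0
  -- the `v`-derivative of α vanishes on the real line
  have hL2 : fderiv ℝ α (u, 0) ((0:ℝ),(1:ℝ)) = 0 := by
    have hαd : HasFDerivAt α (fderiv ℝ α (u, 0)) (u, 0) :=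
      (hα.differentiable one_ne_zero _).hasFDerivAt
    have hcur1 : HasDerivAt (fun w : ℝ => ((u : ℝ), w)) (((0:ℝ),(1:ℝ))) 0 :=
      (hasDerivAt_const 0 u).prodMk (hasDerivAt_id 0)
    have h1 : HasDerivAt (fun w : ℝ => α (u, w)) (fderiv ℝ α (u, 0) ((0:ℝ),(1:ℝ))) 0 :=
      hαd.comp_hasDerivAt 0 hcur1
    have hcur2 : HasDerivAt (fun w : ℝ => ((u : ℝ), -w)) (((0:ℝ),(-1:ℝ))) 0 :=
      (hasDerivAt_const 0 u).prodMk (hasDerivAt_id 0).neg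
    have h2 : HasDerivAt (fun w : ℝ => α (u, -w)) (fderiv ℝ α (u, 0) ((0:ℝ),(-1:ℝ))) 0 := by
      exact hαd.comp_hasDerivAt_of_eq 0 hcur2 (by norm_num)
    have h2' : (fun w : ℝ => α (u, -w)) = fun w : ℝ => α (u, w) :=
      funext fun w => hslice.even_α u w
    rw [h2'] at h2
    have huniq := h1.unique h2
    have hneg : fderiv ℝ α (u, 0) ((0:ℝ),(-1:ℝ)) = -fderiv ℝ α (u, 0) ((0:ℝ),(1:ℝ)) := by
      rw [show (((0:ℝ),(-1:ℝ)) : ℝ × ℝ) = -(((0:ℝ),(1:ℝ)) : ℝ × ℝ) by norm_num, map_neg]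
    rw [hneg] at huniq
    have h3 : (2:ℝ) • fderiv ℝ α (u, 0) ((0:ℝ),(1:ℝ)) = 0 := by
      rw [two_smul]
      nth_rewrite 1 [huniq]
      exact neg_add_cancel _
    rcases smul_eq_zero.mp h3 with h4 | h4
    · norm_num at h4
    · exact h4
  -- slope limit
  have T3 : Filter.Tendsto (fun v : ℝ => v⁻¹ • β (u, v)) (nhdsWithin 0 (Set.Ioi 0))
      (nhds (fderiv ℝ β (u, 0) ((0:ℝ),(1:ℝ)))) := by
    have hβd : HasFDerivAt β (fderiv ℝ β (u, 0)) (u, 0) :=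
      (hβ.differentiable one_ne_zero _).hasFDerivAt
    have hcur1 : HasDerivAt (fun w : ℝ => ((u : ℝ), w)) (((0:ℝ),(1:ℝ))) 0 :=
      (hasDerivAt_const 0 u).prodMk (hasDerivAt_id 0)
    have hψ : HasDerivAt (fun w : ℝ => β (u, w)) (fderiv ℝ β (u, 0) ((0:ℝ),(1:ℝ))) 0 :=
      hβd.comp_hasDerivAt 0 hcur1
    rw [hasDerivAt_iff_tendsto_slope] at hψ
    have hmono : nhdsWithin (0:ℝ) (Set.Ioi 0) ≤ nhdsWithin (0:ℝ) {(0:ℝ)}ᶜ :=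
      nhdsWithin_mono 0 fun x hx => ne_of_gt hx
    have := hψ.mono_left hmono
    apply this.congr
    intro v
    rw [slope_def_module, beta_zero hslice, sub_zero, sub_zero]
  -- combine
  have hRHS : Filter.Tendsto (fun v : ℝ =>
      (2:ℝ) • fderiv ℝ α (u, v) ((1:ℝ),(0:ℝ))
        - (2:ℝ) • (I * fderiv ℝ α (u, v) ((0:ℝ),(1:ℝ)))
        + (2:ℝ) • (v⁻¹ • β (u, v))) (nhdsWithin 0 (Set.Ioi 0))
      (nhds ((2:ℝ) • fderiv ℝ α (u, 0) ((1:ℝ),(0:ℝ))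
        - (2:ℝ) • (I * fderiv ℝ α (u, 0) ((0:ℝ),(1:ℝ)))
        + (2:ℝ) • fderiv ℝ β (u, 0) ((0:ℝ),(1:ℝ)))) := by
    exact (((T1.mono_left nhdsWithin_le_nhds).const_smul (2:ℝ)).sub
      (((T2.mono_left nhdsWithin_le_nhds).const_mul I).const_smul (2:ℝ))).add
      (T3.const_smul (2:ℝ))
  -- identify the limit
  have hCR1u : fderiv ℝ β (u, 0) ((0:ℝ),(1:ℝ)) = fderiv ℝ α (u, 0) ((1:ℝ),(0:ℝ)) :=
    (sub_eq_zero.mp (hslice.CR₁ u 0)).symm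
  have hderiv : deriv (fun t : ℝ => f ((t : ℝ) : ℍ[ℝ])) u = fderiv ℝ α (u, 0) ((1:ℝ),(0:ℝ)) := by
    have hprec : (fun t : ℝ => ((t : ℝ) : ℍ[ℝ])) ⁻¹' U ∈ nhds u := by
      apply (Quaternion.continuous_coe.continuousAt).preimage_mem_nhds
      exact hUo.mem_nhds hu
    have hev_real : (fun t : ℝ => f ((t : ℝ) : ℍ[ℝ])) =ᶠ[nhds u] fun t : ℝ => α (t, 0) := by
      apply Filter.eventually_of_mem hprec
      intro t ht
      have hmem : ((t : ℝ) : ℍ[ℝ]) + (0:ℝ) • e1 ∈ U := by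
        rw [zero_smul, add_zero]; exact ht
      have := hslice.rep t 0 e1 e1_re norm_e1 hmem
      rw [zero_smul, add_zero] at this
      show f ((t : ℝ) : ℍ[ℝ]) = α (t, 0)
      rw [this, beta_zero hslice, mul_zero, add_zero]
    have hcur : HasDerivAt (fun t : ℝ => ((t : ℝ), (0:ℝ))) (((1:ℝ),(0:ℝ))) u :=
      (hasDerivAt_id u).prodMk (hasDerivAt_const u 0)
    have hαd : HasFDerivAt α (fderiv ℝ α (u, 0)) (u, 0) :=
      (hα.differentiable one_ne_zero _).hasFDerivAt
    have hd : HasDerivAt (fun t : ℝ => α (t, 0)) (fderiv ℝ α (u, 0) ((1:ℝ),(0:ℝ))) u :=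
      hαd.comp_hasDerivAt u hcur
    have hd2 : HasDerivAt (fun t : ℝ => f ((t : ℝ) : ℍ[ℝ]))
        (fderiv ℝ α (u, 0) ((1:ℝ),(0:ℝ))) u := by
      apply hd.congr_of_eventuallyEq hev_real
    exact hd2.deriv
  have hfinal : (4 : ℝ) • deriv (fun t : ℝ => f ((t : ℝ) : ℍ[ℝ])) u
      = (2:ℝ) • fderiv ℝ α (u, 0) ((1:ℝ),(0:ℝ))
        - (2:ℝ) • (I * fderiv ℝ α (u, 0) ((0:ℝ),(1:ℝ)))
        + (2:ℝ) • fderiv ℝ β (u, 0) ((0:ℝ),(1:ℝ)) := by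
    rw [hderiv, hCR1u, hL2, mul_zero]
    module
  rw [hfinal]
  exact Filter.Tendsto.congr' (hev.mono fun v h => h.symm) hRHS

end RepAux

/-- Representation formula for axially polyanalytic functions of order 2, i.e. for `D̄f`. -/
theorem representation_formula_axially_polyanalytic (U : Set ℍ[ℝ])
    (hUo : IsOpen U) (hUs : AxiallySymmetric U)
    (f : ℍ[ℝ] → ℍ[ℝ]) (α β : ℝ × ℝ → ℍ[ℝ])
    (hslice : IsSliceHyperholomorphic U f α β) :
    (∀ q ∈ U, Quaternion.im q ≠ 0 → ∀ I : ℍ[ℝ], I.re = 0 → ‖I‖ = 1 →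
      CFbar f q =
        (fderiv ℝ f ((q.re : ℍ[ℝ]) + ‖Quaternion.im q‖ • I) 1 +
          fderiv ℝ f ((q.re : ℍ[ℝ]) - ‖Quaternion.im q‖ • I) 1) +
        ((‖Quaternion.im q‖)⁻¹ • Quaternion.im q) * I *
          (fderiv ℝ f ((q.re : ℍ[ℝ]) - ‖Quaternion.im q‖ • I) 1 -
            fderiv ℝ f ((q.re : ℍ[ℝ]) + ‖Quaternion.im q‖ • I) 1) +
        (Quaternion.im q)⁻¹ * ((‖Quaternion.im q‖)⁻¹ • Quaternion.im q) * I *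
          (f ((q.re : ℍ[ℝ]) - ‖Quaternion.im q‖ • I) -
            f ((q.re : ℍ[ℝ]) + ‖Quaternion.im q‖ • I))) ∧
    (∀ u : ℝ, (u : ℍ[ℝ]) ∈ U → ∀ I : ℍ[ℝ], I.re = 0 → ‖I‖ = 1 →
      Filter.Tendsto (fun v : ℝ => CFbar f ((u : ℍ[ℝ]) + v • I))
        (nhdsWithin 0 (Set.Ioi 0))
        (nhds ((4 : ℝ) • deriv (fun t : ℝ => f (t : ℍ[ℝ])) u))) :=
  ⟨RepAux.part_one U hUo hUs f α β hslice, RepAux.part_two U hUo hUs f α β hslice⟩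
end
end

section
/- For n ∈ ℕ define the axially harmonic Appell polynomials Hₙ : ℍ → ℍ by Hₙ(q) = (1/(n+1))·∑_{k=1}^{n+1} q̄^{k−1}·q^{n+1−k}. Then: (i) for every n ≥ 1, Hₙ is real-differentiable on ℍ and its partial derivative in the direction 1 satisfies ∂_{q₀}Hₙ(q) = n·H_{n−1}(q) for every q ∈ ℍ (Appell property); (ii) ‖Hₙ(q)‖ ≤ ‖q‖ⁿ for every q ∈ ℍ; (iii) for every n ≥ 1 and every q ∈ ℍ with Im q ≠ 0: H_{n−1}(q) = −((Im q)⁻¹/(2n))·(q̄ⁿ − qⁿ). -/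
noncomputable section
open Quaternion

instance : StarModule ℝ ℍ[ℝ] := ⟨fun r a => (Quaternion.star_smul r a).symm ▸ rfl⟩

def Good (f : ℍ[ℝ] → ℍ[ℝ]) (q a : ℍ[ℝ]) : Prop :=
  ∃ D : ℍ[ℝ] →L[ℝ] ℍ[ℝ], HasFDerivAt f D q ∧ D 1 = a

lemma good_pow (m : ℕ) (q : ℍ[ℝ]) : Good (fun p : ℍ[ℝ] => p ^ m) q (m • q ^ (m - 1)) := by
  induction m with
  | zero =>
    exact ⟨0, by simpa using hasFDerivAt_const (1 : ℍ[ℝ]) q, by simp⟩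
  | succ m ih =>
    obtain ⟨D, hD, hD1⟩ := ih
    refine ⟨q ^ m • ContinuousLinearMap.id ℝ ℍ[ℝ] + D.smulRight q, ?_, ?_⟩
    · have h := hD.mul' (hasFDerivAt_id q)
      have he : (fun p : ℍ[ℝ] => p ^ (m + 1)) = (fun p => p ^ m) * id := by
        funext p; simp [pow_succ]
      rw [he]; exact h
    · simp only [ContinuousLinearMap.add_apply, ContinuousLinearMap.smul_apply,
        ContinuousLinearMap.smulRight_apply, ContinuousLinearMap.id_apply, hD1]
      cases m with
      | zero => simp
      | succ m =>
        simp only [Nat.add_sub_cancel, smul_mul_assoc, ← pow_succ, smul_eq_mul, smul_eq_mul]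
        rw [succ_nsmul ((q:ℍ[ℝ]) ^ (m+1)) (m+1)]
        rw [mul_one]
        abel

lemma good_star_pow (k : ℕ) (q : ℍ[ℝ]) :
    Good (fun p : ℍ[ℝ] => star p ^ k) q (k • star q ^ (k - 1)) := by
  obtain ⟨D, hD, hD1⟩ := good_pow k (star q)
  refine ⟨D ∘L ((starL' ℝ : ℍ[ℝ] ≃L[ℝ] ℍ[ℝ]) : ℍ[ℝ] →L[ℝ] ℍ[ℝ]), ?_, ?_⟩
  · exact hD.comp q ((hasFDerivAt_id q).star)
  · simpa using hD1

lemma good_term (k m : ℕ) (q : ℍ[ℝ]) :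
    Good (fun p : ℍ[ℝ] => star p ^ k * p ^ m) q
      (k • (star q ^ (k - 1) * q ^ m) + m • (star q ^ k * q ^ (m - 1))) := by
  obtain ⟨D₁, hD₁, h1⟩ := good_star_pow k q
  obtain ⟨D₂, hD₂, h2⟩ := good_pow m q
  refine ⟨star q ^ k • D₂ + D₁.smulRight (q ^ m), hD₁.mul' hD₂, ?_⟩
  simp only [ContinuousLinearMap.add_apply, ContinuousLinearMap.smul_apply,
    ContinuousLinearMap.smulRight_apply, h1, h2, smul_eq_mul, mul_smul_comm, smul_mul_assoc]
  exact add_comm _ _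

lemma good_H (n : ℕ) (q : ℍ[ℝ]) :
    Good (fun p : ℍ[ℝ] => ((n : ℝ) + 1)⁻¹ • ∑ k ∈ Finset.range (n + 1), (star p) ^ k * p ^ (n - k)) q
      (((n : ℝ) + 1)⁻¹ • ∑ k ∈ Finset.range (n + 1),
        (k • (star q ^ (k - 1) * q ^ (n - k)) + (n - k) • (star q ^ k * q ^ (n - k - 1)))) := by
  choose D hD hD1 using fun k => good_term k (n - k) q
  refine ⟨((n : ℝ) + 1)⁻¹ • ∑ k ∈ Finset.range (n + 1), D k, ?_, ?_⟩
  · exact (HasFDerivAt.fun_sum (fun k _ => hD k)).const_smul ((n : ℝ) + 1)⁻¹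
  · simp [hD1]

lemma key_sum (m : ℕ) (q : ℍ[ℝ]) :
    ∑ k ∈ Finset.range (m + 1 + 1),
        (k • (star q ^ (k - 1) * q ^ (m + 1 - k)) + (m + 1 - k) • (star q ^ k * q ^ (m + 1 - k - 1)))
      = (m + 2) • ∑ k ∈ Finset.range (m + 1), star q ^ k * q ^ (m - k) := by
  rw [Finset.sum_add_distrib]
  have h1 : ∑ k ∈ Finset.range (m + 1 + 1), k • (star q ^ (k - 1) * q ^ (m + 1 - k))
      = ∑ i ∈ Finset.range (m + 1), (i + 1) • (star q ^ i * q ^ (m - i)) := by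
    rw [Finset.sum_range_succ']
    simp [Nat.succ_sub_succ]
  have h2 : ∑ k ∈ Finset.range (m + 1 + 1), (m + 1 - k) • (star q ^ k * q ^ (m + 1 - k - 1))
      = ∑ k ∈ Finset.range (m + 1), (m + 1 - k) • (star q ^ k * q ^ (m - k)) := by
    rw [Finset.sum_range_succ]
    simp only [Nat.sub_self, zero_smul, add_zero]
    refine Finset.sum_congr rfl fun k hk => ?_
    have : m + 1 - k - 1 = m - k := by omega
    rw [this]
  rw [h1, h2, ← Finset.sum_add_distrib, Finset.smul_sum]
  refine Finset.sum_congr rfl fun k hk => ?_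
  rw [← add_nsmul]
  congr 1
  have : k < m + 1 := Finset.mem_range.mp hk
  omega

/-- Properties of the axially harmonic Appell polynomials
`Hₙ(q) = (1/(n+1)) ∑_{k=1}^{n+1} q̄^{k−1} q^{n+1−k}`. -/
theorem harmonic_appell_polynomials (H : ℕ → ℍ[ℝ] → ℍ[ℝ])
    (hH : ∀ (n : ℕ) (q : ℍ[ℝ]),
      H n q = ((n : ℝ) + 1)⁻¹ • ∑ k ∈ Finset.range (n + 1), (star q) ^ k * q ^ (n - k)) :
    (∀ n : ℕ, 1 ≤ n → ∀ q : ℍ[ℝ],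
      DifferentiableAt ℝ (H n) q ∧ fderiv ℝ (H n) q 1 = (n : ℝ) • H (n - 1) q) ∧
    (∀ (n : ℕ) (q : ℍ[ℝ]), ‖H n q‖ ≤ ‖q‖ ^ n) ∧
    (∀ n : ℕ, 1 ≤ n → ∀ q : ℍ[ℝ], Quaternion.im q ≠ 0 →
      H (n - 1) q = -((2 * (n : ℝ))⁻¹ • (Quaternion.im q)⁻¹) * ((star q) ^ n - q ^ n)) := by
  refine ⟨?_, ?_, ?_⟩
  · -- Appell property
    rintro n hn q
    obtain ⟨m, rfl⟩ : ∃ m, n = m + 1 := ⟨n - 1, by omega⟩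
    have hfun : H (m + 1) = fun p : ℍ[ℝ] =>
        ((((m : ℕ) + 1 : ℕ) : ℝ) + 1)⁻¹ •
          ∑ k ∈ Finset.range (m + 1 + 1), (star p) ^ k * p ^ (m + 1 - k) :=
      funext (hH (m + 1))
    obtain ⟨D, hD, hD1⟩ := good_H (m + 1) q
    rw [hfun]
    refine ⟨hD.differentiableAt, ?_⟩
    rw [hD.fderiv, hD1, key_sum m q]
    simp only [Nat.add_sub_cancel]
    rw [hH m q, ← Nat.cast_smul_eq_nsmul ℝ (m + 2), smul_smul, smul_smul]
    congr 1
    have h1 : ((m : ℝ) + 1) ≠ 0 := by positivity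
    push_cast
    field_simp
    ring
  · -- norm bound
    intro n q
    rw [hH, norm_smul]
    have hb : ‖∑ k ∈ Finset.range (n + 1), (star q) ^ k * q ^ (n - k)‖
        ≤ ((n : ℝ) + 1) * ‖q‖ ^ n := by
      calc ‖∑ k ∈ Finset.range (n + 1), (star q) ^ k * q ^ (n - k)‖
          ≤ ∑ k ∈ Finset.range (n + 1), ‖(star q) ^ k * q ^ (n - k)‖ := norm_sum_le _ _
        _ = ∑ k ∈ Finset.range (n + 1), ‖q‖ ^ n := by
            refine Finset.sum_congr rfl fun k hk => ?_
            rw [norm_mul, norm_pow, norm_pow, norm_star, ← pow_add]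
            congr 1
            exact Nat.add_sub_cancel' (Nat.lt_succ_iff.mp (Finset.mem_range.mp hk))
        _ = ((n : ℝ) + 1) * ‖q‖ ^ n := by
            rw [Finset.sum_const, Finset.card_range, nsmul_eq_mul]
            push_cast
            ring
    have hnn : ‖((n : ℝ) + 1)⁻¹‖ = ((n : ℝ) + 1)⁻¹ :=
      Real.norm_of_nonneg (by positivity)
    rw [hnn]
    calc ((n : ℝ) + 1)⁻¹ * ‖∑ k ∈ Finset.range (n + 1), (star q) ^ k * q ^ (n - k)‖
        ≤ ((n : ℝ) + 1)⁻¹ * (((n : ℝ) + 1) * ‖q‖ ^ n) :=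
          mul_le_mul_of_nonneg_left hb (by positivity)
      _ = ‖q‖ ^ n := by
          rw [inv_mul_cancel_left₀ (by positivity : ((n : ℝ) + 1) ≠ 0)]
  · -- closed form on nonreal quaternions
    rintro n hn q hq
    obtain ⟨m, rfl⟩ : ∃ m, n = m + 1 := ⟨n - 1, by omega⟩
    simp only [Nat.add_sub_cancel]
    rw [hH m q]
    have hc : Commute (star q) q := star_comm_self' q
    have hgeo := hc.mul_geom_sum₂ (m + 1)
    simp only [Nat.add_sub_cancel] at hgeo
    have hd : star q - q = (-2 : ℝ) • Quaternion.im q := by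
      ext <;> simp <;> ring
    have hne : star q - q ≠ 0 := by
      rw [hd]; exact smul_ne_zero (by norm_num) hq
    have hsum : ∑ k ∈ Finset.range (m + 1), (star q) ^ k * q ^ (m - k)
        = (star q - q)⁻¹ * ((star q) ^ (m + 1) - q ^ (m + 1)) := by
      rw [← hgeo, inv_mul_cancel_left₀ hne]
    have hinv : (star q - q)⁻¹ = ((-2 : ℝ))⁻¹ • (Quaternion.im q)⁻¹ := by
      rw [hd, ← Quaternion.coe_mul_eq_smul, mul_inv_rev, ← Quaternion.coe_inv,
        ← Quaternion.coe_commutes, Quaternion.coe_mul_eq_smul]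
    rw [hsum, hinv, smul_mul_assoc, smul_smul, ← neg_smul, smul_mul_assoc]
    congr 1
    push_cast
    rw [mul_inv]
    ring
end
end

section
/- Let p ∈ ℍ and n ≥ 1, and define Gₙ : ℍ → ℍ by Gₙ(q) := eval_p((q − X)ⁿ) = ∑_{k=0}^{n} binom(n,k)·(−1)ᵏ·q^{n−k}·pᵏ (the star power (q − p)^{*n}). Then, with the Cauchy–Fueter operator D acting in the variable q, for every q ∈ ℍ: D(Gₙ)(q) = −2·∑_{k=1}^{n} eval_p((q − X)^{n−k}·(q̄ − X)^{k−1}), where the products are taken in ℍ[X] before evaluating at p. -/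
noncomputable section
open Quaternion

section Aux

open Polynomial Finset

/-- The fundamental quaternionic conjugation identity `∑ ε a ε = -2 star a`. -/
lemma quat_conj_sum (a : ℍ[ℝ]) :
    a + e1 * a * e1 + e2 * a * e2 + e3 * a * e3 = (-2 : ℝ) • star a := by
  ext <;> simp only [Quaternion.re_add, Quaternion.imI_add, Quaternion.imJ_add, Quaternion.imK_add, Quaternion.re_mul, Quaternion.imI_mul, Quaternion.imJ_mul, Quaternion.imK_mul] <;> simp [e1, e2, e3, Quaternion.ext_iff] <;> ring

lemma eval_C_sub_X_mul (p a : ℍ[ℝ]) (S : (ℍ[ℝ])[X]) :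
    ((C a - X) * S).eval p = a * S.eval p - S.eval p * p := by
  rw [sub_mul, eval_sub, eval_C_mul, X_mul, eval_mul_X]

/-- The star power `(q - p)^{*n}` as a function of `q`. -/
def Gf (p : ℍ[ℝ]) (n : ℕ) (q : ℍ[ℝ]) : ℍ[ℝ] := ((C q - X) ^ n).eval p

lemma Gf_succ (p : ℍ[ℝ]) (n : ℕ) (q : ℍ[ℝ]) :
    Gf p (n + 1) q = q * Gf p n q - Gf p n q * p := by
  rw [Gf, pow_succ', eval_C_sub_X_mul, Gf]

/-- The coefficients in the derivative of `Gf`. -/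
def Mf (p : ℍ[ℝ]) : ℕ → ℕ → ℍ[ℝ] → ℍ[ℝ]
  | 0, _, _ => 0
  | n + 1, 0, q => Gf p n q - Mf p n 0 q * p
  | n + 1, i + 1, q => Mf p n i q - Mf p n (i + 1) q * p

lemma Mf_eq_zero (p : ℍ[ℝ]) : ∀ n i : ℕ, n ≤ i → ∀ q, Mf p n i q = 0 := by
  intro n
  induction n with
  | zero => intro i _ q; rfl
  | succ n ih =>
    intro i hi q
    match i, hi with
    | i + 1, hi =>
      rw [Mf, ih i (Nat.le_of_succ_le_succ hi),
        ih (i+1) (le_trans (Nat.le_of_succ_le_succ hi) (Nat.le_succ i)), zero_mul, sub_zero]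

/-- `Gf p n` is differentiable with derivative `v ↦ ∑ qⁱ v Mᵢ`. -/
lemma Gf_deriv (p : ℍ[ℝ]) (n : ℕ) (q : ℍ[ℝ]) :
    ∃ L : ℍ[ℝ] →L[ℝ] ℍ[ℝ], HasFDerivAt (Gf p n) L q ∧
      ∀ v, L v = ∑ i ∈ Finset.range n, q ^ i * v * Mf p n i q := by
  induction n generalizing q with
  | zero =>
    refine ⟨0, ?_, ?_⟩
    · have : Gf p 0 = fun _ => 1 := by funext r; simp [Gf]
      rw [this]; exact hasFDerivAt_const _ _
    · intro v; simp
  | succ n ih =>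
    obtain ⟨L, hL, hLv⟩ := ih q
    have hfun : (fun r => r * Gf p n r - Gf p n r * p) = Gf p (n + 1) := by
      funext r; rw [Gf_succ]
    have h1 : HasFDerivAt (fun r : ℍ[ℝ] => r * Gf p n r)
        (q • L + (ContinuousLinearMap.id ℝ ℍ[ℝ]).smulRight (Gf p n q)) q :=
      (hasFDerivAt_id q).mul' hL
    have h2 : HasFDerivAt (fun r => Gf p n r * p) (L.smulRight p) q := hL.mul_const' p
    refine ⟨_, by rw [← hfun]; exact h1.sub h2, ?_⟩
    intro v
    have happ : (q • L + (ContinuousLinearMap.id ℝ ℍ[ℝ]).smulRight (Gf p n q) - L.smulRight p) v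
        = v * Gf p n q + q * L v - L v * p := by
      simp [smul_eq_mul]
      rw [add_comm]
    rw [happ, hLv]
    have e1 : q * ∑ i ∈ Finset.range n, q ^ i * v * Mf p n i q
        = ∑ i ∈ Finset.range n, q ^ (i+1) * v * Mf p n i q := by
      rw [Finset.mul_sum]
      exact Finset.sum_congr rfl fun i _ => by rw [pow_succ', mul_assoc, mul_assoc, mul_assoc]
    have e2 : (∑ i ∈ Finset.range n, q ^ i * v * Mf p n i q) * p
        = ∑ i ∈ Finset.range n, q ^ i * v * (Mf p n i q * p) := by
      rw [Finset.sum_mul]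
      exact Finset.sum_congr rfl fun i _ => by rw [mul_assoc]
    have e4 : ∑ i ∈ Finset.range n, q ^ i * v * (Mf p n i q * p)
        = v * (Mf p n 0 q * p) + ∑ i ∈ Finset.range n, q ^ (i+1) * v * (Mf p n (i+1) q * p) := by
      have h5 : ∑ i ∈ Finset.range n, q ^ i * v * (Mf p n i q * p)
          = ∑ i ∈ Finset.range (n+1), q ^ i * v * (Mf p n i q * p) := by
        rw [Finset.sum_range_succ, Mf_eq_zero p n n le_rfl, zero_mul, mul_zero, add_zero]
      rw [h5, Finset.sum_range_succ']
      rw [pow_zero, one_mul, add_comm]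
    rw [e1, e2, e4, Finset.sum_range_succ']
    simp only [Mf, pow_zero, one_mul]
    have e3 : ∑ i ∈ Finset.range n, q ^ (i+1) * v * (Mf p n i q - Mf p n (i+1) q * p)
        = (∑ i ∈ Finset.range n, q ^ (i+1) * v * Mf p n i q)
          - ∑ i ∈ Finset.range n, q ^ (i+1) * v * (Mf p n (i+1) q * p) := by
      rw [← Finset.sum_sub_distrib]
      exact Finset.sum_congr rfl fun i _ => by rw [mul_sub]
    rw [e3, mul_sub]
    abel

/-- The value of `CF (Gf p n)`, before identification with the star-product sum. -/
def Nf (p : ℍ[ℝ]) (n : ℕ) (q : ℍ[ℝ]) : ℍ[ℝ] :=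
  ∑ i ∈ Finset.range n, (star q) ^ i * Mf p n i q

lemma CF_Gf (p : ℍ[ℝ]) (n : ℕ) (q : ℍ[ℝ]) : CF (Gf p n) q = (-2 : ℝ) • Nf p n q := by
  obtain ⟨L, hL, hLv⟩ := Gf_deriv p n q
  rw [CF, hL.fderiv, hLv, hLv, hLv, hLv]
  rw [Finset.mul_sum, Finset.mul_sum, Finset.mul_sum, ← Finset.sum_add_distrib,
    ← Finset.sum_add_distrib, ← Finset.sum_add_distrib, Nf, Finset.smul_sum]
  refine Finset.sum_congr rfl fun i _ => ?_
  have h1 : e1 * (q ^ i * e1 * Mf p n i q) = e1 * q ^ i * e1 * Mf p n i q := by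
    simp only [mul_assoc]
  have h2 : e2 * (q ^ i * e2 * Mf p n i q) = e2 * q ^ i * e2 * Mf p n i q := by
    simp only [mul_assoc]
  have h3 : e3 * (q ^ i * e3 * Mf p n i q) = e3 * q ^ i * e3 * Mf p n i q := by
    simp only [mul_assoc]
  rw [h1, h2, h3, mul_one]
  calc q ^ i * Mf p n i q + e1 * q ^ i * e1 * Mf p n i q + e2 * q ^ i * e2 * Mf p n i q
        + e3 * q ^ i * e3 * Mf p n i q
      = (q ^ i + e1 * q ^ i * e1 + e2 * q ^ i * e2 + e3 * q ^ i * e3) * Mf p n i q := by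
        rw [add_mul, add_mul, add_mul]
    _ = ((-2 : ℝ) • star (q ^ i)) * Mf p n i q := by rw [quat_conj_sum]
    _ = (-2 : ℝ) • (star q ^ i * Mf p n i q) := by rw [star_pow, smul_mul_assoc]

lemma Nf_succ (p : ℍ[ℝ]) (n : ℕ) (q : ℍ[ℝ]) :
    Nf p (n + 1) q = Gf p n q + star q * Nf p n q - Nf p n q * p := by
  rw [Nf, Finset.sum_range_succ']
  simp only [Mf, pow_zero, one_mul]
  have e1 : star q * Nf p n q = ∑ i ∈ Finset.range n, (star q) ^ (i+1) * Mf p n i q := by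
    rw [Nf, Finset.mul_sum]
    exact Finset.sum_congr rfl fun i _ => by rw [pow_succ', mul_assoc]
  have e2 : Nf p n q * p = ∑ i ∈ Finset.range n, (star q) ^ i * (Mf p n i q * p) := by
    rw [Nf, Finset.sum_mul]
    exact Finset.sum_congr rfl fun i _ => by rw [mul_assoc]
  have e4 : Nf p n q * p
      = Mf p n 0 q * p + ∑ i ∈ Finset.range n, (star q) ^ (i+1) * (Mf p n (i+1) q * p) := by
    rw [e2]
    have h5 : ∑ i ∈ Finset.range n, (star q) ^ i * (Mf p n i q * p)
        = ∑ i ∈ Finset.range (n+1), (star q) ^ i * (Mf p n i q * p) := by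
      rw [Finset.sum_range_succ, Mf_eq_zero p n n le_rfl, zero_mul, mul_zero, add_zero]
    rw [h5, Finset.sum_range_succ', pow_zero, one_mul, add_comm]
  have e3 : ∑ i ∈ Finset.range n, (star q) ^ (i+1) * (Mf p n i q - Mf p n (i+1) q * p)
      = (∑ i ∈ Finset.range n, (star q) ^ (i+1) * Mf p n i q)
        - ∑ i ∈ Finset.range n, (star q) ^ (i+1) * (Mf p n (i+1) q * p) := by
    rw [← Finset.sum_sub_distrib]
    exact Finset.sum_congr rfl fun i _ => by rw [mul_sub]
  rw [e3, e1, e4]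
  abel

/-- The star-product sum, indexed over `range n`. -/
def Rf (p : ℍ[ℝ]) (n : ℕ) (q : ℍ[ℝ]) : ℍ[ℝ] :=
  ∑ j ∈ Finset.range n, ((C q - X) ^ (n - (j + 1)) * (C (star q) - X) ^ j).eval p

lemma commPQ (q : ℍ[ℝ]) : Commute (C q - X) (C (star q) - X : (ℍ[ℝ])[X]) := by
  have hq : q * star q = star q * q := by
    rw [Quaternion.self_mul_star, Quaternion.star_mul_self]
  have hc : Commute (C q) (C (star q) : (ℍ[ℝ])[X]) := by
    unfold Commute SemiconjBy
    rw [← C_mul, ← C_mul, hq]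
  exact ((hc.sub_right (commute_X (C q)).symm).sub_left
    ((commute_X (C (star q))).sub_right (Commute.refl X)))

lemma Rf_succ (p : ℍ[ℝ]) (n : ℕ) (q : ℍ[ℝ]) :
    Rf p (n + 1) q = Gf p n q + star q * Rf p n q - Rf p n q * p := by
  rw [Rf, Finset.sum_range_succ']
  simp only [Nat.succ_sub_succ]
  rw [Nat.sub_zero, pow_zero, mul_one]
  have key : ∀ j ∈ Finset.range n,
      (((C q - X) ^ (n - (j+1)) * (C (star q) - X) ^ (j+1)).eval p : ℍ[ℝ])
        = star q * ((C q - X) ^ (n - (j+1)) * (C (star q) - X) ^ j).eval p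
          - ((C q - X) ^ (n - (j+1)) * (C (star q) - X) ^ j).eval p * p := by
    intro j _
    have hcomm : (C q - X : (ℍ[ℝ])[X]) ^ (n - (j+1)) * (C (star q) - X)
        = (C (star q) - X) * (C q - X) ^ (n - (j+1)) :=
      ((commPQ q).symm.pow_right (n - (j+1))).eq.symm
    rw [pow_succ', ← mul_assoc, hcomm, mul_assoc, eval_C_sub_X_mul]
  rw [Finset.sum_congr rfl key, Finset.sum_sub_distrib]
  have e1 : star q * Rf p n q
      = ∑ j ∈ Finset.range n,
          star q * ((C q - X) ^ (n - (j+1)) * (C (star q) - X) ^ j).eval p := by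
    rw [Rf, Finset.mul_sum]
  have e2 : Rf p n q * p
      = ∑ j ∈ Finset.range n,
          ((C q - X) ^ (n - (j+1)) * (C (star q) - X) ^ j).eval p * p := by
    rw [Rf, Finset.sum_mul]
  rw [← e1, ← e2, Gf]
  abel

lemma Nf_eq_Rf (p : ℍ[ℝ]) (n : ℕ) (q : ℍ[ℝ]) : Nf p n q = Rf p n q := by
  induction n with
  | zero => simp [Nf, Rf]
  | succ n ih => rw [Nf_succ, Rf_succ, ih]

end Aux

open Polynomial in
/-- The Cauchy–Fueter operator applied to the star power `(q−p)^{*n}`. -/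
theorem CF_star_power (p : ℍ[ℝ]) (n : ℕ) (hn : 1 ≤ n) (G : ℍ[ℝ] → ℍ[ℝ])
    (hG : ∀ q : ℍ[ℝ], G q = ((C q - X) ^ n).eval p) :
    ∀ q : ℍ[ℝ], CF G q =
      (-2 : ℝ) • ∑ k ∈ Finset.Icc 1 n,
        (((C q - X) ^ (n - k) * (C (star q) - X) ^ (k - 1)).eval p) := by
  intro q
  have hGf : G = Gf p n := funext fun r => hG r
  rw [hGf, CF_Gf, Nf_eq_Rf]
  congr 1
  rw [Rf]
  have hIcc : Finset.Icc 1 n = Finset.Ico 1 (n + 1) := (Finset.Ico_add_one_right_eq_Icc 1 n).symm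
  rw [hIcc, Finset.sum_Ico_eq_sum_range, Nat.add_sub_cancel]
  refine Finset.sum_congr rfl fun j _ => ?_
  rw [add_comm 1 j, Nat.add_sub_cancel]
end
end

section
/- Let p ∈ ℍ and n ≥ 2, and define Gₙ : ℍ → ℍ by Gₙ(q) := eval_p((q − X)ⁿ) (the star power (q − p)^{*n}). Then, with the Laplacian Δ acting in the variable q, for every q ∈ ℍ: Δ(Gₙ)(q) = −4·∑_{k=1}^{n−1} (n−k)·eval_p((q − X)^{n−k−1}·(q̄ − X)^{k−1}), where the products are taken in ℍ[X] before evaluating at p. -/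
noncomputable section
open Quaternion

/-- The Laplacian `Δf = ∂₀²f + ∂₁²f + ∂₂²f + ∂₃²f` on `ℍ ≅ ℝ⁴`. -/
def Lap (f : ℍ[ℝ] → ℍ[ℝ]) (q : ℍ[ℝ]) : ℍ[ℝ] :=
  fderiv ℝ (fun x => fderiv ℝ f x 1) q 1 + fderiv ℝ (fun x => fderiv ℝ f x e1) q e1 +
    fderiv ℝ (fun x => fderiv ℝ f x e2) q e2 + fderiv ℝ (fun x => fderiv ℝ f x e3) q e3

open Polynomial Finset

lemma hockey (N i : ℕ) : ∑ b ∈ range (N + 1), b.choose i = (N + 1).choose (i + 1) := by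
  rcases le_or_gt i N with h | h
  · rw [← Nat.sum_Icc_choose N i]
    refine (Finset.sum_subset ?_ ?_).symm
    · intro x hx; simp only [mem_Icc] at hx; simp only [mem_range]; omega
    · intro x hx h'; simp only [mem_range] at hx
      simp only [mem_Icc, not_and, not_le] at h'
      exact Nat.choose_eq_zero_of_lt (by omega)
  · rw [Nat.choose_eq_zero_of_lt (by omega)]
    apply Finset.sum_eq_zero
    intro x hx; simp only [mem_range] at hx
    exact Nat.choose_eq_zero_of_lt (by omega)

lemma conv (N i j : ℕ) : ∑ b ∈ range (N + 1), b.choose i * (N - b).choose j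
    = (N + 1).choose (i + j + 1) := by
  induction N generalizing j with
  | zero =>
    rw [Finset.sum_range_one]
    simp only [Nat.sub_self]
    rcases Nat.eq_zero_or_pos i with rfl | hi
    · rcases Nat.eq_zero_or_pos j with rfl | hj
      · simp
      · rw [Nat.choose_eq_zero_of_lt (by omega : (0:ℕ) < j)]
        rw [Nat.choose_eq_zero_of_lt (by omega : (1:ℕ) < 0 + j + 1)]
        simp
    · simp [Nat.choose_eq_zero_of_lt hi,
        Nat.choose_eq_zero_of_lt (by omega : (1:ℕ) < i + j + 1)]
  | succ N ih =>
    cases j with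
    | zero =>
      simp only [Nat.choose_zero_right, mul_one]
      rw [hockey]
    | succ j =>
      rw [Finset.sum_range_succ]
      have h1 : ∀ b ∈ range (N + 1), b.choose i * (N + 1 - b).choose (j + 1)
          = b.choose i * (N - b).choose (j + 1) + b.choose i * (N - b).choose j := by
        intro b hb; simp only [mem_range] at hb
        have h : N + 1 - b = (N - b) + 1 := by omega
        rw [h, Nat.choose_succ_succ, Nat.mul_add, add_comm]
      rw [Finset.sum_congr rfl h1, Finset.sum_add_distrib, ih (j+1), ih j,
        Nat.choose_eq_zero_of_lt (by omega : N + 1 - (N + 1) < j + 1), mul_zero, add_zero]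
      have e1 : i + (j + 1) + 1 = i + j + 1 + 1 := by omega
      rw [e1, Nat.choose_succ_succ (N + 1) (i + j + 1)]
      simp only [Nat.succ_eq_add_one]
      omega

lemma key (n u t : ℕ) (hn : 2 ≤ n) :
    (u + 1) * n.choose (u + t + 2)
      = ∑ k ∈ Icc 1 (n - 1), (n - k) * ((n - k - 1).choose u * (k - 1).choose t) := by
  have hre : ∑ k ∈ Icc 1 (n - 1), (n - k) * ((n - k - 1).choose u * (k - 1).choose t)
      = ∑ b ∈ range (n - 1), (n - 1 - b) * ((n - 2 - b).choose u * b.choose t) := by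
    rw [← Finset.Ico_add_one_right_eq_Icc, Finset.sum_Ico_eq_sum_range]
    apply Finset.sum_congr (by simp)
    intro b _
    have e2 : n - (1 + b) - 1 = n - 2 - b := by omega
    have e1 : n - (1 + b) = n - 1 - b := by omega
    have e3 : 1 + b - 1 = b := by omega
    rw [e2, e1, e3]
  rw [hre]
  have h2 : ∀ b ∈ range (n - 1), (n - 1 - b) * ((n - 2 - b).choose u * b.choose t)
      = (u + 1) * ((n - 1 - b).choose (u + 1) * b.choose t) := by
    intro b hb; simp only [mem_range] at hb
    have hm : n - 1 - b = (n - 2 - b) + 1 := by omega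
    rw [hm, ← mul_assoc, ← mul_assoc, Nat.add_one_mul_choose_eq, mul_comm _ (u+1)]
  rw [Finset.sum_congr rfl h2, ← Finset.mul_sum]
  congr 1
  have h3 : ∑ b ∈ range (n - 1), (n - 1 - b).choose (u + 1) * b.choose t
      = ∑ b ∈ range n, (n - 1 - b).choose (u + 1) * b.choose t := by
    have hs := Finset.sum_range_succ (fun b => (n - 1 - b).choose (u + 1) * b.choose t) (n - 1)
    have hr : range (n - 1 + 1) = range n := by congr 1; omega
    rw [hr] at hs
    rw [hs, Nat.sub_self, Nat.choose_eq_zero_of_lt (by omega : 0 < u + 1), zero_mul, add_zero]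
  rw [h3]
  have h4 : ∑ b ∈ range n, (n - 1 - b).choose (u + 1) * b.choose t
      = ∑ b ∈ range n, b.choose (u + 1) * (n - 1 - b).choose t := by
    rw [← Finset.sum_range_reflect]
    apply Finset.sum_congr rfl
    intro b hb; simp only [mem_range] at hb
    have e : n - 1 - (n - 1 - b) = b := by omega
    rw [e]
  rw [h4]
  have hc := conv (n - 1) (u + 1) t
  have hr : range (n - 1 + 1) = range n := by congr 1; omega
  rw [hr] at hc
  have : n - 1 + 1 = n := by omega
  rw [this] at hc
  rw [hc]
  congr 1
  omega

lemma cxc (A s1 s2 : ℍ[ℝ]) (j : ℕ) :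
    C A * (C s1 * X ^ j) * C s2 = C (A * (s1 * s2)) * X ^ j := by
  rw [← mul_assoc, ← map_mul, mul_assoc, X_pow_mul, ← mul_assoc, ← map_mul, mul_assoc, map_mul]

lemma expandPow (r : ℍ[ℝ]) (a : ℕ) :
    (C r - X) ^ a = ∑ u ∈ range (a + 1),
      C (r ^ u * ((-1 : ℍ[ℝ]) ^ (a - u) * (a.choose u : ℍ[ℝ]))) * X ^ (a - u) := by
  rw [sub_eq_add_neg, (Polynomial.commute_X (C r)).symm.neg_right.add_pow]
  refine Finset.sum_congr rfl fun u hu => ?_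
  rw [neg_pow, ← C_pow, ← C_eq_natCast,
    show ((-1 : ℍ[ℝ][X]) ^ (a - u)) = C ((-1 : ℍ[ℝ]) ^ (a - u)) by
      rw [C_pow, C_neg, C_1],
    cxc]

lemma gcoe (j m : ℕ) : ((-1 : ℍ[ℝ]) ^ j * (m : ℍ[ℝ])) = (((-1 : ℝ) ^ j * (m : ℝ) : ℝ) : ℍ[ℝ]) := by
  norm_cast

lemma scal (x y z : ℍ[ℝ]) (c d : ℝ) :
    (x * (c : ℍ[ℝ])) * ((y * (d : ℍ[ℝ])) * z) = (c * d) • (x * (y * z)) := by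
  rw [mul_coe_eq_smul, mul_coe_eq_smul, smul_mul_assoc, smul_mul_assoc, mul_smul_comm, smul_smul]

/-- evaluated product of two expanded star-factors -/
lemma evalMul (r s p : ℍ[ℝ]) (a b : ℕ) :
    ((C r - X) ^ a * (C s - X) ^ b).eval p
      = ∑ u ∈ range (a + 1), ∑ t ∈ range (b + 1),
          (((-1 : ℝ) ^ (a - u + (b - t)) * (a.choose u : ℝ) * (b.choose t : ℝ))
            • (r ^ u * (s ^ t * p ^ (a - u + (b - t))))) := by
  rw [expandPow r a, expandPow s b, Finset.sum_mul_sum, eval_finset_sum]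
  refine Finset.sum_congr rfl fun u hu => ?_
  rw [eval_finset_sum]
  refine Finset.sum_congr rfl fun t ht => ?_
  rw [C_mul_X_pow_eq_monomial, C_mul_X_pow_eq_monomial, monomial_mul_monomial, eval_monomial,
    gcoe, gcoe, mul_assoc (r ^ u * _), scal]
  congr 1
  rw [pow_add]
  ring

lemma vbv (y : ℍ[ℝ]) :
    (1 : ℍ[ℝ]) * y * 1 + e1 * y * e1 + e2 * y * e2 + e3 * y * e3 = (-2 : ℝ) • star y := by
  ext <;>
    simp only [Quaternion.re_mul, Quaternion.imI_mul, Quaternion.imJ_mul,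
      Quaternion.imK_mul, Quaternion.re_add, Quaternion.imI_add, Quaternion.imJ_add, Quaternion.imK_add] <;>
    simp [e1, e2, e3] <;> ring

lemma sum4_1 (x y z : ℍ[ℝ]) :
    x * ((1:ℍ[ℝ]) * (y * (1 * z))) + x * (e1 * (y * (e1 * z))) + x * (e2 * (y * (e2 * z)))
      + x * (e3 * (y * (e3 * z))) = (-2 : ℝ) • (x * (star y * z)) := by
  have h : ∀ v : ℍ[ℝ], x * (v * (y * (v * z))) = x * ((v * y * v) * z) := by
    intro v; rw [mul_assoc (v * y) v z, mul_assoc v y (v * z)]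
  rw [h 1, h e1, h e2, h e3, ← mul_add, ← mul_add, ← mul_add, ← add_mul, ← add_mul, ← add_mul,
    vbv, smul_mul_assoc, mul_smul_comm]

lemma sum4_2 (x y z : ℍ[ℝ]) :
    (x * ((1:ℍ[ℝ]) * y)) * (1 * z) + (x * (e1 * y)) * (e1 * z) + (x * (e2 * y)) * (e2 * z)
      + (x * (e3 * y)) * (e3 * z) = (-2 : ℝ) • (x * (star y * z)) := by
  have h : ∀ v : ℍ[ℝ], (x * (v * y)) * (v * z) = x * ((v * y * v) * z) := by
    intro v
    rw [mul_assoc x (v * y) (v * z), mul_assoc (v * y) v z]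
  rw [h 1, h e1, h e2, h e3, ← mul_add, ← mul_add, ← mul_add, ← add_mul, ← add_mul, ← add_mul,
    vbv, smul_mul_assoc, mul_smul_comm]

lemma qcommK (q : ℍ[ℝ]) : Commute q (star q) := by
  rw [Quaternion.star_eq_two_re_sub]
  exact ((Quaternion.coe_commute (2 * q.re) q).symm.sub_right (Commute.refl q))

lemma qKq (q : ℍ[ℝ]) (a j c : ℕ) :
    q ^ a * ((star q) ^ j * q ^ c) = q ^ (a + c) * (star q) ^ j := by
  rw [((qcommK q).symm.pow_pow j c), ← mul_assoc, ← pow_add]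

variable {M : Type*} [AddCommMonoid M]

lemma sumswap (m : ℕ) (F : ℕ → M) :
    ∑ i ∈ range m, ∑ j ∈ range i, F j = ∑ j ∈ range m, (m - 1 - j) • F j := by
  induction m with
  | zero => simp
  | succ m ih =>
    rw [Finset.sum_range_succ, ih, Finset.sum_range_succ]
    have h0 : m + 1 - 1 - m = 0 := by omega
    rw [h0, zero_smul, add_zero, ← Finset.sum_add_distrib]
    apply Finset.sum_congr rfl
    intro j hj; simp only [mem_range] at hj
    have h1 : m + 1 - 1 - j = (m - 1 - j) + 1 := by omega
    rw [h1, succ_nsmul]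

lemma tri (N : ℕ) (f : ℕ → ℕ → M) :
    ∑ m ∈ range N, ∑ j ∈ range (m + 1), f j (m - j)
      = ∑ t ∈ range N, ∑ u ∈ range (N - t), f t u := by
  induction N with
  | zero => simp
  | succ N ih =>
    rw [Finset.sum_range_succ, ih]
    have h1 : ∀ t ∈ range (N + 1), ∑ u ∈ range (N + 1 - t), f t u
        = ∑ u ∈ range (N - t), f t u + f t (N - t) := by
      intro t ht; simp only [mem_range] at ht
      have h : N + 1 - t = (N - t) + 1 := by omega
      rw [h, Finset.sum_range_succ]
    rw [Finset.sum_congr rfl h1, Finset.sum_add_distrib]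
    congr 1
    rw [Finset.sum_range_succ, Nat.sub_self, Finset.range_zero, Finset.sum_empty, add_zero]

noncomputable def dpow (m : ℕ) (q : ℍ[ℝ]) : ℍ[ℝ] →L[ℝ] ℍ[ℝ] :=
  ∑ i ∈ Finset.range m,
    ((ContinuousLinearMap.mul ℝ ℍ[ℝ] (q ^ i)).comp
      ((ContinuousLinearMap.mul ℝ ℍ[ℝ]).flip (q ^ (m - 1 - i))))

lemma dpow_apply (m : ℕ) (q v : ℍ[ℝ]) :
    dpow m q v = ∑ i ∈ Finset.range m, q ^ i * (v * q ^ (m - 1 - i)) := by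
  simp [dpow, ContinuousLinearMap.sum_apply, ContinuousLinearMap.mul_apply',
    ContinuousLinearMap.flip_apply, mul_assoc]

lemma hasFDerivAt_npow (m : ℕ) (q : ℍ[ℝ]) :
    HasFDerivAt (fun x : ℍ[ℝ] => x ^ m) (dpow m q) q := by
  induction m with
  | zero =>
    simp only [pow_zero, dpow, Finset.range_zero, Finset.sum_empty]
    exact hasFDerivAt_const 1 q
  | succ m ih =>
    have h := ih.mul' (hasFDerivAt_id q)
    have he : (fun x : ℍ[ℝ] => x ^ (m + 1)) = fun x => x ^ m * x := by
      funext x; rw [pow_succ]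
    have heq : dpow (m + 1) q
        = q ^ m • ContinuousLinearMap.id ℝ ℍ[ℝ] + (dpow m q).smulRight (_root_.id q) := by
      refine ContinuousLinearMap.ext fun v => ?_
      simp only [dpow, ContinuousLinearMap.sum_apply, ContinuousLinearMap.add_apply,
      ContinuousLinearMap.smul_apply, ContinuousLinearMap.comp_apply,
      ContinuousLinearMap.mul_apply', ContinuousLinearMap.flip_apply,
      ContinuousLinearMap.smulRight_apply, ContinuousLinearMap.coe_id', id_eq,
      smul_eq_mul, _root_.id]
      rw [Finset.sum_range_succ, Finset.sum_mul]
      have h1 : m + 1 - 1 - m = 0 := by omega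
      rw [h1, pow_zero, mul_one, add_comm]
      congr 1
      apply Finset.sum_congr rfl
      intro i hi
      simp only [Finset.mem_range] at hi
      rw [mul_assoc, mul_assoc, ← pow_succ]
      congr 3
      omega
    rw [he, heq]
    exact h

noncomputable def d2pow (m : ℕ) (q v : ℍ[ℝ]) : ℍ[ℝ] →L[ℝ] ℍ[ℝ] :=
  ∑ i ∈ Finset.range m,
    (q ^ i • (v • dpow (m - 1 - i) q) + (dpow i q).smulRight (v * q ^ (m - 1 - i)))

lemma hasFDerivAt_dpow (m : ℕ) (q v : ℍ[ℝ]) :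
    HasFDerivAt (fun x => dpow m x v) (d2pow m q v) q := by
  have he : (fun x => dpow m x v)
      = fun x => ∑ i ∈ Finset.range m, x ^ i * (v * x ^ (m - 1 - i)) := by
    funext x; exact dpow_apply m x v
  rw [he, d2pow]
  apply HasFDerivAt.fun_sum
  intro i _
  exact (hasFDerivAt_npow i q).mul' ((hasFDerivAt_npow (m - 1 - i) q).const_mul v)

lemma d2pow_apply (m : ℕ) (q v w : ℍ[ℝ]) :
    d2pow m q v w = ∑ i ∈ Finset.range m,
      (q ^ i * (v * (dpow (m - 1 - i) q w)) + (dpow i q w) * (v * q ^ (m - 1 - i))) := by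
  simp only [d2pow, ContinuousLinearMap.sum_apply, ContinuousLinearMap.add_apply,
    ContinuousLinearMap.smul_apply, ContinuousLinearMap.smulRight_apply, smul_eq_mul]

lemma d2sum (q : ℍ[ℝ]) (m : ℕ) :
    d2pow m q 1 1 + d2pow m q e1 e1 + d2pow m q e2 e2 + d2pow m q e3 e3
      = (-4 : ℝ) • ∑ j ∈ range m, (m - 1 - j) • (q ^ (m - 2 - j) * (star q) ^ j) := by
  rw [d2pow_apply, d2pow_apply, d2pow_apply, d2pow_apply,
    ← Finset.sum_add_distrib, ← Finset.sum_add_distrib, ← Finset.sum_add_distrib]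
  have hterm : ∀ i ∈ range m,
      (q ^ i * (1 * (dpow (m - 1 - i) q 1)) + (dpow i q 1) * (1 * q ^ (m - 1 - i)))
      + (q ^ i * (e1 * (dpow (m - 1 - i) q e1)) + (dpow i q e1) * (e1 * q ^ (m - 1 - i)))
      + (q ^ i * (e2 * (dpow (m - 1 - i) q e2)) + (dpow i q e2) * (e2 * q ^ (m - 1 - i)))
      + (q ^ i * (e3 * (dpow (m - 1 - i) q e3)) + (dpow i q e3) * (e3 * q ^ (m - 1 - i)))
      = (∑ b ∈ range (m - 1 - i), (-2 : ℝ) • (q ^ (i + (m - 1 - i - 1 - b)) * (star q) ^ b))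
        + (∑ a ∈ range i, (-2 : ℝ) • (q ^ (a + (m - 1 - i)) * (star q) ^ (i - 1 - a))) := by
    intro i hi
    simp only [mem_range] at hi
    have hre : ∀ v : ℍ[ℝ],
        q ^ i * (v * (dpow (m - 1 - i) q v)) + (dpow i q v) * (v * q ^ (m - 1 - i))
        = (∑ b ∈ range (m - 1 - i), q ^ i * (v * (q ^ b * (v * q ^ (m - 1 - i - 1 - b)))))
          + (∑ a ∈ range i, (q ^ a * (v * q ^ (i - 1 - a))) * (v * q ^ (m - 1 - i))) := by
      intro v
      rw [dpow_apply, dpow_apply, Finset.mul_sum, Finset.mul_sum, Finset.sum_mul]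
    rw [hre 1, hre e1, hre e2, hre e3]
    have hstep : ∀ (A1 A2 A3 A4 B1 B2 B3 B4 : ℍ[ℝ]),
        (A1 + B1) + (A2 + B2) + (A3 + B3) + (A4 + B4)
          = (A1 + A2 + A3 + A4) + (B1 + B2 + B3 + B4) := by intros; abel
    rw [hstep]
    congr 1
    · rw [← Finset.sum_add_distrib, ← Finset.sum_add_distrib, ← Finset.sum_add_distrib]
      refine Finset.sum_congr rfl fun b hb => ?_
      rw [sum4_1, star_pow, qKq]
    · rw [← Finset.sum_add_distrib, ← Finset.sum_add_distrib, ← Finset.sum_add_distrib]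
      refine Finset.sum_congr rfl fun a ha => ?_
      rw [sum4_2, star_pow, qKq]
  rw [Finset.sum_congr rfl hterm, Finset.sum_add_distrib]
  have hP : ∑ i ∈ range m, ∑ b ∈ range (m - 1 - i),
        (-2 : ℝ) • (q ^ (i + (m - 1 - i - 1 - b)) * (star q) ^ b)
      = ∑ i ∈ range m, ∑ j ∈ range i, (-2 : ℝ) • (q ^ (m - 2 - j) * (star q) ^ j) := by
    have h1 : ∀ i ∈ range m, ∑ b ∈ range (m - 1 - i),
          (-2 : ℝ) • (q ^ (i + (m - 1 - i - 1 - b)) * (star q) ^ b)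
        = ∑ b ∈ range (m - 1 - i), (-2 : ℝ) • (q ^ (m - 2 - b) * (star q) ^ b) := by
      intro i hi; simp only [mem_range] at hi
      refine Finset.sum_congr rfl fun b hb => ?_
      simp only [mem_range] at hb
      have he : i + (m - 1 - i - 1 - b) = m - 2 - b := by omega
      rw [he]
    rw [Finset.sum_congr rfl h1]
    exact Finset.sum_range_reflect
      (fun c => ∑ b ∈ range c, (-2 : ℝ) • (q ^ (m - 2 - b) * (star q) ^ b)) m
  have hQ : ∑ i ∈ range m, ∑ a ∈ range i,
        (-2 : ℝ) • (q ^ (a + (m - 1 - i)) * (star q) ^ (i - 1 - a))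
      = ∑ i ∈ range m, ∑ j ∈ range i, (-2 : ℝ) • (q ^ (m - 2 - j) * (star q) ^ j) := by
    refine Finset.sum_congr rfl fun i hi => ?_
    simp only [mem_range] at hi
    rw [← Finset.sum_range_reflect (fun j => (-2 : ℝ) • (q ^ (m - 2 - j) * (star q) ^ j)) i]
    refine Finset.sum_congr rfl fun a ha => ?_
    simp only [mem_range] at ha
    have he1 : a + (m - 1 - i) = m - 2 - (i - 1 - a) := by omega
    rw [he1]
  rw [hP, hQ, sumswap m (fun j => (-2 : ℝ) • (q ^ (m - 2 - j) * (star q) ^ j)), ← two_smul ℝ]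
  rw [Finset.smul_sum, Finset.smul_sum]
  refine Finset.sum_congr rfl fun j hj => ?_
  rw [smul_comm (2 : ℝ) (m - 1 - j), smul_comm (-4 : ℝ) (m - 1 - j)]
  congr 1
  rw [smul_smul]
  norm_num

noncomputable def coefR (n m : ℕ) : ℝ := (-1) ^ (n - m) * (n.choose m : ℝ)

lemma Gform (p : ℍ[ℝ]) (n : ℕ) (G : ℍ[ℝ] → ℍ[ℝ])
    (hG : ∀ q : ℍ[ℝ], G q = ((C q - X) ^ n).eval p) (q : ℍ[ℝ]) :
    G q = ∑ m ∈ range (n + 1), coefR n m • (q ^ m * p ^ (n - m)) := by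
  rw [hG q, ← mul_one ((C q - X) ^ n), ← pow_zero (C (0:ℍ[ℝ]) - X), evalMul]
  refine Finset.sum_congr rfl fun m hm => ?_
  rw [Finset.sum_range_one]
  simp only [Nat.sub_self, Nat.choose_self, Nat.cast_one, pow_zero, one_mul, mul_one, add_zero,
    coefR]

noncomputable def DG (p : ℍ[ℝ]) (n : ℕ) (q : ℍ[ℝ]) : ℍ[ℝ] →L[ℝ] ℍ[ℝ] :=
  ∑ m ∈ range (n + 1), coefR n m • ((dpow m q).smulRight (p ^ (n - m)))

lemma hasFDerivAt_G (p : ℍ[ℝ]) (n : ℕ) (G : ℍ[ℝ] → ℍ[ℝ])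
    (hG : ∀ q : ℍ[ℝ], G q = ((C q - X) ^ n).eval p) (q : ℍ[ℝ]) :
    HasFDerivAt G (DG p n q) q := by
  have he : G = fun x => ∑ m ∈ range (n + 1), coefR n m • (x ^ m * p ^ (n - m)) :=
    funext (Gform p n G hG)
  rw [he, DG]
  apply HasFDerivAt.fun_sum
  intro m _
  exact ((hasFDerivAt_npow m q).mul_const' (p ^ (n - m))).const_smul (coefR n m)

lemma fderiv_G_apply (p : ℍ[ℝ]) (n : ℕ) (G : ℍ[ℝ] → ℍ[ℝ])
    (hG : ∀ q : ℍ[ℝ], G q = ((C q - X) ^ n).eval p) (x v : ℍ[ℝ]) :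
    fderiv ℝ G x v = ∑ m ∈ range (n + 1), coefR n m • (dpow m x v * p ^ (n - m)) := by
  rw [(hasFDerivAt_G p n G hG x).fderiv, DG]
  simp only [ContinuousLinearMap.sum_apply, ContinuousLinearMap.smul_apply,
    ContinuousLinearMap.smulRight_apply, smul_eq_mul]

lemma second_deriv (p : ℍ[ℝ]) (n : ℕ) (G : ℍ[ℝ] → ℍ[ℝ])
    (hG : ∀ q : ℍ[ℝ], G q = ((C q - X) ^ n).eval p) (q v : ℍ[ℝ]) :
    fderiv ℝ (fun x => fderiv ℝ G x v) q v
      = ∑ m ∈ range (n + 1), coefR n m • (d2pow m q v v * p ^ (n - m)) := by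
  have he : (fun x => fderiv ℝ G x v)
      = fun x => ∑ m ∈ range (n + 1), coefR n m • (dpow m x v * p ^ (n - m)) :=
    funext fun x => fderiv_G_apply p n G hG x v
  rw [he]
  have hd : HasFDerivAt (fun x => ∑ m ∈ range (n + 1), coefR n m • (dpow m x v * p ^ (n - m)))
      (∑ m ∈ range (n + 1), coefR n m • ((d2pow m q v).smulRight (p ^ (n - m)))) q := by
    apply HasFDerivAt.fun_sum
    intro m _
    exact ((hasFDerivAt_dpow m q v).mul_const' (p ^ (n - m))).const_smul (coefR n m)
  rw [hd.fderiv]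
  simp only [ContinuousLinearMap.sum_apply, ContinuousLinearMap.smul_apply,
    ContinuousLinearMap.smulRight_apply, smul_eq_mul]

def CANON (q p : ℍ[ℝ]) (N : ℕ) : ℍ[ℝ] :=
  ∑ t ∈ range (N + 1), ∑ u ∈ range (N + 1),
    (((-1 : ℝ) ^ (N - t - u) * (((u + 1) * (N + 2).choose (t + u + 2) : ℕ) : ℝ))
      • (q ^ u * ((star q) ^ t * p ^ (N - t - u))))

lemma lhs_eq (q p : ℍ[ℝ]) (N : ℕ) :
    ∑ m ∈ range (N + 3), ∑ j ∈ range m,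
        (coefR (N + 2) m * ((m - 1 - j : ℕ) : ℝ))
          • (q ^ (m - 2 - j) * ((star q) ^ j * p ^ (N + 2 - m)))
      = CANON q p N := by
  rw [Finset.sum_range_succ']
  rw [Finset.sum_range_succ']
  rw [Finset.sum_range_zero]
  have hf1 : ∑ j ∈ range (0 + 1),
      (coefR (N + 2) (0 + 1) * (((0 + 1) - 1 - j : ℕ) : ℝ))
        • (q ^ ((0 + 1) - 2 - j) * ((star q) ^ j * p ^ (N + 2 - (0 + 1)))) = 0 := by
    rw [Finset.sum_range_one]
    norm_num
  rw [hf1, add_zero, add_zero]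
  have h2 : ∀ m ∈ range (N + 1), ∑ j ∈ range (m + 1 + 1),
        (coefR (N + 2) (m + 1 + 1) * ((m + 1 + 1 - 1 - j : ℕ) : ℝ))
          • (q ^ (m + 1 + 1 - 2 - j) * ((star q) ^ j * p ^ (N + 2 - (m + 1 + 1))))
      = ∑ j ∈ range (m + 1),
          (coefR (N + 2) (j + (m - j) + 2) * (((m - j) + 1 : ℕ) : ℝ))
            • (q ^ (m - j) * ((star q) ^ j * p ^ (N - j - (m - j)))) := by
    intro m hm
    rw [Finset.sum_range_succ]
    have hz : (m + 1 + 1 - 1 - (m + 1) : ℕ) = 0 := by omega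
    rw [hz, Nat.cast_zero, mul_zero, zero_smul, add_zero]
    refine Finset.sum_congr rfl fun j hj => ?_
    simp only [mem_range] at hj
    have e1 : j + (m - j) + 2 = m + 1 + 1 := by omega
    have e2 : ((m - j) + 1 : ℕ) = m + 1 + 1 - 1 - j := by omega
    have e3 : N - j - (m - j) = N + 2 - (m + 1 + 1) := by omega
    have e4 : m - j = m + 1 + 1 - 2 - j := by omega
    rw [e1, e2, e3]
    rw [show q ^ (m - j) = q ^ (m + 1 + 1 - 2 - j) from by rw [← e4]]
  rw [Finset.sum_congr rfl h2]
  rw [tri (N + 1) (fun t u =>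
    (coefR (N + 2) (t + u + 2) * ((u + 1 : ℕ) : ℝ))
      • (q ^ u * ((star q) ^ t * p ^ (N - t - u))))]
  rw [CANON]
  refine Finset.sum_congr rfl fun t ht => ?_
  simp only [mem_range] at ht
  have hpad : ∑ u ∈ range (N + 1 - t),
        (coefR (N + 2) (t + u + 2) * ((u + 1 : ℕ) : ℝ))
          • (q ^ u * ((star q) ^ t * p ^ (N - t - u)))
      = ∑ u ∈ range (N + 1),
        (coefR (N + 2) (t + u + 2) * ((u + 1 : ℕ) : ℝ))
          • (q ^ u * ((star q) ^ t * p ^ (N - t - u))) := by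
    apply Finset.sum_subset
    · intro x hx; simp only [mem_range] at *; omega
    · intro x hx hx'
      simp only [mem_range] at hx hx'
      have hc : (N + 2).choose (t + x + 2) = 0 := Nat.choose_eq_zero_of_lt (by omega)
      rw [coefR, hc]
      norm_num
  rw [hpad]
  refine Finset.sum_congr rfl fun u hu => ?_
  congr 1
  rw [coefR]
  have he : N + 2 - (t + u + 2) = N - t - u := by omega
  rw [he]
  push_cast
  ring

lemma rhs_eq (q p : ℍ[ℝ]) (N : ℕ) :
    ∑ k ∈ Icc 1 (N + 1), (((N + 2 : ℕ) : ℝ) - (k : ℝ))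
        • (((C q - X) ^ (N + 2 - k - 1) * (C (star q) - X) ^ (k - 1)).eval p)
      = CANON q p N := by
  have step1 : ∀ k ∈ Icc 1 (N + 1),
      (((N + 2 : ℕ) : ℝ) - (k : ℝ))
          • (((C q - X) ^ (N + 2 - k - 1) * (C (star q) - X) ^ (k - 1)).eval p)
        = ∑ u ∈ range (N + 1), ∑ t ∈ range (N + 1),
            ((((N + 2 - k : ℕ) : ℝ) * ((-1 : ℝ) ^ (N - t - u)
              * ((N + 2 - k - 1).choose u : ℝ) * ((k - 1).choose t : ℝ)))
              • (q ^ u * ((star q) ^ t * p ^ (N - t - u)))) := by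
    intro k hk
    simp only [mem_Icc] at hk
    rw [evalMul]
    have hcast : ((N + 2 - k : ℕ) : ℝ) = ((N + 2 : ℕ) : ℝ) - (k : ℝ) := by
      push_cast [Nat.cast_sub (by omega : k ≤ N + 2)]
      ring
    rw [Finset.smul_sum]
    -- normalize the inner sums
    have hinner : ∀ u ∈ range (N + 2 - k - 1 + 1),
        (((N + 2 : ℕ) : ℝ) - (k : ℝ)) • ∑ t ∈ range (k - 1 + 1),
            (((-1 : ℝ) ^ (N + 2 - k - 1 - u + (k - 1 - t)) * ((N + 2 - k - 1).choose u : ℝ)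
              * ((k - 1).choose t : ℝ))
              • (q ^ u * ((star q) ^ t * p ^ (N + 2 - k - 1 - u + (k - 1 - t)))))
        = ∑ t ∈ range (N + 1),
            ((((N + 2 - k : ℕ) : ℝ) * ((-1 : ℝ) ^ (N - t - u)
              * ((N + 2 - k - 1).choose u : ℝ) * ((k - 1).choose t : ℝ)))
              • (q ^ u * ((star q) ^ t * p ^ (N - t - u)))) := by
      intro u hu
      simp only [mem_range] at hu
      rw [Finset.smul_sum]
      have hts : ∀ t ∈ range (k - 1 + 1),
          (((N + 2 : ℕ) : ℝ) - (k : ℝ)) •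
            (((-1 : ℝ) ^ (N + 2 - k - 1 - u + (k - 1 - t)) * ((N + 2 - k - 1).choose u : ℝ)
              * ((k - 1).choose t : ℝ))
              • (q ^ u * ((star q) ^ t * p ^ (N + 2 - k - 1 - u + (k - 1 - t)))))
          = (((N + 2 - k : ℕ) : ℝ) * ((-1 : ℝ) ^ (N - t - u)
              * ((N + 2 - k - 1).choose u : ℝ) * ((k - 1).choose t : ℝ)))
              • (q ^ u * ((star q) ^ t * p ^ (N - t - u))) := by
        intro t ht
        simp only [mem_range] at ht
        have he : N + 2 - k - 1 - u + (k - 1 - t) = N - t - u := by omega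
        rw [he, smul_smul, hcast]
      rw [Finset.sum_congr rfl hts]
      apply Finset.sum_subset
      · intro x hx; simp only [mem_range] at *; omega
      · intro x hx hx'
        simp only [mem_range] at hx hx'
        have hc : (k - 1).choose x = 0 := Nat.choose_eq_zero_of_lt (by omega)
        rw [hc]
        norm_num
    rw [Finset.sum_congr rfl hinner]
    apply Finset.sum_subset
    · intro x hx; simp only [mem_range] at *; omega
    · intro x hx hx'
      simp only [mem_range] at hx hx'
      apply Finset.sum_eq_zero
      intro t ht
      have hc : (N + 2 - k - 1).choose x = 0 := Nat.choose_eq_zero_of_lt (by omega)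
      rw [hc]
      norm_num
  rw [Finset.sum_congr rfl step1]
  rw [Finset.sum_comm]
  have hswap : ∀ u ∈ range (N + 1),
      ∑ k ∈ Icc 1 (N + 1), ∑ t ∈ range (N + 1),
          ((((N + 2 - k : ℕ) : ℝ) * ((-1 : ℝ) ^ (N - t - u)
            * ((N + 2 - k - 1).choose u : ℝ) * ((k - 1).choose t : ℝ)))
            • (q ^ u * ((star q) ^ t * p ^ (N - t - u))))
      = ∑ t ∈ range (N + 1), ∑ k ∈ Icc 1 (N + 1),
          ((((N + 2 - k : ℕ) : ℝ) * ((-1 : ℝ) ^ (N - t - u)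
            * ((N + 2 - k - 1).choose u : ℝ) * ((k - 1).choose t : ℝ)))
            • (q ^ u * ((star q) ^ t * p ^ (N - t - u)))) := by
    intro u _
    exact Finset.sum_comm
  rw [Finset.sum_congr rfl hswap, Finset.sum_comm, CANON]
  refine Finset.sum_congr rfl fun t ht => ?_
  refine Finset.sum_congr rfl fun u hu => ?_
  rw [← Finset.sum_smul]
  congr 1
  have hterm : ∀ k ∈ Icc 1 (N + 1),
      (((N + 2 - k : ℕ) : ℝ) * ((-1 : ℝ) ^ (N - t - u)
        * ((N + 2 - k - 1).choose u : ℝ) * ((k - 1).choose t : ℝ)))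
      = (-1 : ℝ) ^ (N - t - u)
          * (((N + 2 - k) * ((N + 2 - k - 1).choose u * (k - 1).choose t) : ℕ) : ℝ) := by
    intro k _
    push_cast
    ring
  rw [Finset.sum_congr rfl hterm, ← Finset.mul_sum, ← Nat.cast_sum]
  have hkey := key (N + 2) u t (by omega)
  have hn1 : N + 2 - 1 = N + 1 := by omega
  rw [hn1] at hkey
  rw [← hkey]
  have huts : u + t + 2 = t + u + 2 := by omega
  rw [huts]

open Polynomial in
/-- The Laplacian applied to the star power `(q−p)^{*n}`. -/
theorem laplacian_star_power (p : ℍ[ℝ]) (n : ℕ) (hn : 2 ≤ n) (G : ℍ[ℝ] → ℍ[ℝ])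
    (hG : ∀ q : ℍ[ℝ], G q = ((C q - X) ^ n).eval p) :
    ∀ q : ℍ[ℝ], Lap G q =
      (-4 : ℝ) • ∑ k ∈ Finset.Icc 1 (n - 1),
        ((n : ℝ) - (k : ℝ)) •
          (((C q - X) ^ (n - k - 1) * (C (star q) - X) ^ (k - 1)).eval p) := by
  obtain ⟨N, rfl⟩ : ∃ N : ℕ, n = N + 2 := ⟨n - 2, by omega⟩
  intro q
  have hm : ∀ m ∈ Finset.range (N + 2 + 1),
      coefR (N + 2) m • (d2pow m q 1 1 * p ^ (N + 2 - m))
      + coefR (N + 2) m • (d2pow m q e1 e1 * p ^ (N + 2 - m))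
      + coefR (N + 2) m • (d2pow m q e2 e2 * p ^ (N + 2 - m))
      + coefR (N + 2) m • (d2pow m q e3 e3 * p ^ (N + 2 - m))
      = (-4 : ℝ) • ∑ j ∈ Finset.range m,
          (coefR (N + 2) m * ((m - 1 - j : ℕ) : ℝ))
            • (q ^ (m - 2 - j) * ((star q) ^ j * p ^ (N + 2 - m))) := by
    intro m _
    rw [← smul_add, ← smul_add, ← smul_add, ← add_mul, ← add_mul, ← add_mul, d2sum,
      smul_mul_assoc, smul_comm (coefR (N + 2) m) (-4 : ℝ)]
    congr 1
    rw [Finset.sum_mul, Finset.smul_sum]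
    refine Finset.sum_congr rfl fun j hj => ?_
    rw [← Nat.cast_smul_eq_nsmul ℝ (m - 1 - j), smul_mul_assoc, smul_smul, mul_assoc]
  simp only [Lap]
  rw [second_deriv p (N + 2) G hG q 1, second_deriv p (N + 2) G hG q e1,
    second_deriv p (N + 2) G hG q e2, second_deriv p (N + 2) G hG q e3,
    ← Finset.sum_add_distrib, ← Finset.sum_add_distrib, ← Finset.sum_add_distrib,
    Finset.sum_congr rfl hm, ← Finset.smul_sum]
  have hl := lhs_eq q p N
  rw [show Finset.range (N + 3) = Finset.range (N + 2 + 1) from rfl] at hl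
  rw [hl]
  have hr := rhs_eq q p N
  rw [show (N + 2 - 1) = (N + 1) from rfl, hr]

end
end

section
/- Let p ∈ ℍ and n ≥ 1, and define Gₙ : ℍ → ℍ by Gₙ(q) := eval_p((q − X)ⁿ) (the star power (q − p)^{*n}). Then, with the conjugate Cauchy–Fueter operator D̄ acting in the variable q, for every q ∈ ℍ: D̄(Gₙ)(q) = 2·( n·eval_p((q − X)^{n−1}) + ∑_{k=1}^{n} eval_p((q − X)^{n−k}·(q̄ − X)^{k−1}) ), where the products are taken in ℍ[X] before evaluating at p. -/
noncomputable section
open Quaternion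

open Polynomial

lemma quat_id (a : ℍ[ℝ]) :
    a - e1 * a * e1 - e2 * a * e2 - e3 * a * e3 = (2:ℝ) • (a + star a) := by
  ext <;> simp only [Quaternion.re_mul, Quaternion.imI_mul, Quaternion.imJ_mul, Quaternion.imK_mul, Quaternion.re_sub, Quaternion.imI_sub, Quaternion.imJ_sub, Quaternion.imK_sub] <;> simp [e1, e2, e3] <;> ring

lemma neg_X_pow_cast (m c : ℕ) :
    ((-X : (ℍ[ℝ])[X])^m * (c : (ℍ[ℝ])[X])) = (((-1:ℝ)^m * c : ℝ)) • X^m := by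
  rw [neg_pow, Algebra.smul_def]
  push_cast
  rw [mul_assoc, ← (Nat.cast_commute (c:ℕ) (X^m : (ℍ[ℝ])[X])).eq, ← mul_assoc]

lemma coeff_sub_pow (q : ℍ[ℝ]) (j k : ℕ) :
    ((C q - X)^j).coeff k = ((-1:ℝ)^k * (j.choose k)) • q^(j-k) := by
  have hc : Commute (C q) (-X : (ℍ[ℝ])[X]) := ((commute_X (C q)).symm).neg_right
  rw [sub_eq_add_neg, hc.add_pow, finset_sum_coeff]
  simp only [mul_assoc, ← C_pow, coeff_C_mul, neg_X_pow_cast, coeff_smul, coeff_X_pow]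
  rcases le_or_gt k j with h | h
  · rw [Finset.sum_eq_single (j - k)]
    · rw [Nat.sub_sub_self h, Nat.choose_symm h]
      simp [mul_smul_comm]
    · intro b hb hne
      have hb' := Finset.mem_range.mp hb
      have : ¬ (k = j - b) := by omega
      simp [this]
    · intro h2; simp at h2
  · rw [Finset.sum_eq_zero]
    · simp [Nat.choose_eq_zero_of_lt h]
    · intro b hb
      have hb' := Finset.mem_range.mp hb
      have : ¬ (k = j - b) := by omega
      simp [this]

lemma coeff_star_sub_pow (q : ℍ[ℝ]) (j k : ℕ) :
    ((C (star q) - X)^j).coeff k = star (((C q - X)^j).coeff k) := by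
  simp [coeff_sub_pow, Quaternion.star_smul, star_pow]

lemma poly_id (q : ℍ[ℝ]) (j : ℕ) :
    (C q - X)^j - C e1 * (C q - X)^j * C e1 - C e2 * (C q - X)^j * C e2
      - C e3 * (C q - X)^j * C e3
      = (2:ℝ) • ((C q - X)^j + (C (star q) - X)^j) := by
  apply Polynomial.ext; intro k
  simp only [coeff_sub, coeff_smul, coeff_add, coeff_C_mul, coeff_mul_C,
    coeff_star_sub_pow]
  exact quat_id _

lemma commAB (q : ℍ[ℝ]) : Commute (C q - X : (ℍ[ℝ])[X]) (C (star q) - X) := by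
  have hq : Commute q (star q) := (star_comm_self' q).symm
  have h1 : Commute (C q : (ℍ[ℝ])[X]) (C (star q) - X) :=
    (hq.map C).sub_right (commute_X (C q)).symm
  have h2 : Commute (X : (ℍ[ℝ])[X]) (C (star q) - X) :=
    (commute_X (C (star q))).symm.symm.sub_right (Commute.refl X)
  exact h1.sub_left h2

abbrev Spoly (q v : ℍ[ℝ]) (n : ℕ) : (ℍ[ℝ])[X] :=
  ∑ j ∈ Finset.range n, (C q - X)^j * C v * (C q - X)^(n-1-j)

def Dmap (p q : ℍ[ℝ]) (n : ℕ) : ℍ[ℝ] →L[ℝ] ℍ[ℝ] :=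
  LinearMap.toContinuousLinearMap
  { toFun := fun v => (Spoly q v n).eval p
    map_add' := by
      intro v w
      simp only [Spoly, C_add, add_mul, mul_add, Finset.sum_add_distrib, eval_add]
    map_smul' := by
      intro r v
      simp only [Spoly, RingHom.id_apply]
      rw [← eval_smul, Finset.smul_sum]
      congr 1
      apply Finset.sum_congr rfl
      intro j _
      rw [← smul_C, mul_smul_comm, smul_mul_assoc] }

lemma Dmap_apply (p q v : ℍ[ℝ]) (n : ℕ) : Dmap p q n v = (Spoly q v n).eval p := rfl

lemma eval_succ (p q : ℍ[ℝ]) (n : ℕ) :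
    ((C q - X)^(n+1)).eval p = q * ((C q - X)^n).eval p - ((C q - X)^n).eval p * p := by
  rw [pow_succ', sub_mul, eval_sub, eval_C_mul, (commute_X ((C q - X)^n)).eq, eval_mul_X]

lemma Spoly_succ (q v : ℍ[ℝ]) (n : ℕ) :
    Spoly q v (n+1) = C v * (C q - X)^n + (C q - X) * Spoly q v n := by
  rw [Spoly, Finset.sum_range_succ']
  simp only [pow_zero, one_mul, Nat.add_sub_cancel, Nat.sub_zero]
  rw [add_comm, Finset.mul_sum]
  congr 1
  apply Finset.sum_congr rfl
  intro j hj
  rw [← mul_assoc, ← mul_assoc, ← pow_succ']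
  congr 2
  omega

lemma eval_Spoly_succ (p q v : ℍ[ℝ]) (n : ℕ) :
    (Spoly q v (n+1)).eval p
      = v * ((C q - X)^n).eval p
        + (q * (Spoly q v n).eval p - (Spoly q v n).eval p * p) := by
  rw [Spoly_succ, eval_add, eval_C_mul, sub_mul, eval_sub, eval_C_mul,
    (commute_X (Spoly q v n)).eq, eval_mul_X]

lemma key_s18 (p : ℍ[ℝ]) (n : ℕ) (q : ℍ[ℝ]) :
    HasFDerivAt (fun q : ℍ[ℝ] => ((C q - X)^n).eval p) (Dmap p q n) q := by
  induction n generalizing q with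
  | zero =>
    have h : (fun q : ℍ[ℝ] => ((C q - X)^0).eval p) = fun _ => (1 : ℍ[ℝ]) := by
      funext q; simp
    rw [h]
    have h0 : Dmap p q 0 = 0 := by
      apply ContinuousLinearMap.ext; intro v
      rw [Dmap_apply]; simp [Spoly]
    rw [h0]
    exact hasFDerivAt_const _ _
  | succ n ih =>
    have hfun : (fun q : ℍ[ℝ] => ((C q - X)^(n+1)).eval p)
        = fun q => q * ((C q - X)^n).eval p - ((C q - X)^n).eval p * p := by
      funext q; rw [eval_succ]
    rw [hfun]
    have h1 := ((hasFDerivAt_id q).mul' (ih q)).sub ((ih q).mul_const' p)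
    refine h1.congr_fderiv ?_
    apply ContinuousLinearMap.ext; intro v
    simp only [ContinuousLinearMap.sub_apply, ContinuousLinearMap.add_apply,
      ContinuousLinearMap.smul_apply, ContinuousLinearMap.smulRight_apply,
      ContinuousLinearMap.coe_id', id_eq, Dmap_apply, smul_eq_mul]
    rw [eval_Spoly_succ]
    abel

lemma main_poly (q : ℍ[ℝ]) (n : ℕ) (hn : 1 ≤ n) :
    Spoly q 1 n - C e1 * Spoly q e1 n - C e2 * Spoly q e2 n - C e3 * Spoly q e3 n
      = (2:ℝ) • ((n:ℝ) • (C q - X)^(n-1)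
          + ∑ k ∈ Finset.Icc 1 n, (C q - X)^(n-k) * (C (star q) - X)^(k-1)) := by
  rw [Spoly, Spoly, Spoly, Spoly, Finset.mul_sum, Finset.mul_sum, Finset.mul_sum,
    ← Finset.sum_sub_distrib, ← Finset.sum_sub_distrib, ← Finset.sum_sub_distrib]
  have hterm : ∀ j ∈ Finset.range n,
      ((C q - X)^j * C 1 * (C q - X)^(n-1-j)
        - C e1 * ((C q - X)^j * C e1 * (C q - X)^(n-1-j))
        - C e2 * ((C q - X)^j * C e2 * (C q - X)^(n-1-j))
        - C e3 * ((C q - X)^j * C e3 * (C q - X)^(n-1-j)))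
      = (2:ℝ) • ((C q - X)^(n-1) + (C q - X)^(n-1-j) * (C (star q) - X)^j) := by
    intro j hj
    have hj' : j < n := Finset.mem_range.mp hj
    have step1 : ((C q - X)^j * C 1 * (C q - X)^(n-1-j)
        - C e1 * ((C q - X)^j * C e1 * (C q - X)^(n-1-j))
        - C e2 * ((C q - X)^j * C e2 * (C q - X)^(n-1-j))
        - C e3 * ((C q - X)^j * C e3 * (C q - X)^(n-1-j)))
        = ((C q - X)^j - C e1 * (C q - X)^j * C e1 - C e2 * (C q - X)^j * C e2
            - C e3 * (C q - X)^j * C e3) * (C q - X)^(n-1-j) := by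
      simp only [map_one, mul_one]
      noncomm_ring
    rw [step1, poly_id, smul_mul_assoc, add_mul,
      ((commAB q).symm.pow_pow j (n-1-j)).eq, ← pow_add]
    congr 3
    omega
  rw [Finset.sum_congr rfl hterm, ← Finset.smul_sum, Finset.sum_add_distrib,
    Finset.sum_const, Finset.card_range, Nat.cast_smul_eq_nsmul]
  congr 1
  have himg : Finset.Icc 1 n = Finset.image (· + 1) (Finset.range n) := by
    ext x
    simp only [Finset.mem_Icc, Finset.mem_image, Finset.mem_range]
    constructor
    · rintro ⟨h1, h2⟩; exact ⟨x - 1, by omega, by omega⟩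
    · rintro ⟨a, ha, rfl⟩; omega
  rw [himg, Finset.sum_image (by intro a _ b _ h; simp only at h; omega)]
  congr 1
  apply Finset.sum_congr rfl
  intro j hj
  have h1 : n - (j + 1) = n - 1 - j := by omega
  rw [h1, Nat.add_sub_cancel]

open Polynomial in
/-- The conjugate Cauchy–Fueter operator applied to the star power `(q−p)^{*n}`. -/
theorem CFbar_star_power (p : ℍ[ℝ]) (n : ℕ) (hn : 1 ≤ n) (G : ℍ[ℝ] → ℍ[ℝ])
    (hG : ∀ q : ℍ[ℝ], G q = ((C q - X) ^ n).eval p) :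
    ∀ q : ℍ[ℝ], CFbar G q =
      (2 : ℝ) • ((n : ℝ) • (((C q - X) ^ (n - 1)).eval p) +
        ∑ k ∈ Finset.Icc 1 n,
          (((C q - X) ^ (n - k) * (C (star q) - X) ^ (k - 1)).eval p)) := by
  intro q
  have hGfun : G = fun q : ℍ[ℝ] => ((C q - X) ^ n).eval p := funext hG
  have hd : fderiv ℝ G q = Dmap p q n := by
    rw [hGfun]; exact (key_s18 p n q).fderiv
  rw [CFbar, hd, Dmap_apply, Dmap_apply, Dmap_apply, Dmap_apply,
    ← eval_C_mul, ← eval_C_mul, ← eval_C_mul, ← eval_sub, ← eval_sub, ← eval_sub,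
    main_poly q n hn, eval_smul, eval_add, eval_smul, eval_finset_sum]
end
end
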